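/- arXiv:2301.12600 — 7 statements merged into one kernel-verified Lean document; each statement's English description precedes it below -/
import Mathlib

section
/- Let (Y_r)_{r∈S} be a family of values in [0,1] indexed by a finite probability space (S, Q), and for each i ∈ [n] suppose P_{r∼Q}{i∈r} = p ∈ (0,1) and Cov_{r∼Q}(1_{i∈r},1_{j∈r}) = -q ≤ 0 for i≠j. Define ŷ = E_{r∼Q}[Y_r] and ŷ^{∖i} = E_{r∼Q}[Y_r | i∉r]. Then for any ε, δ ≥ 0 with δε² ≥ (1/(4n))·(p/(1-p) + q/(1-p)²), at most δn indices i satisfy |ŷ - ŷ^{∖i}| > ε. -/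
set_option maxHeartbeats 1000000 in
/-- main stability theorem, abstract core: Let `(Y_r)_{r∈S}` be values in
`[0,1]` indexed by a finite probability space `(S, Q)` (weights `w`), and for each
`i ∈ [n]` suppose `P{i∈r} = p ∈ (0,1)` and `Cov(1_{i∈r},1_{j∈r}) = -q ≤ 0` for `i ≠ j`.
With `ŷ = E[Y_r]` and `ŷ^{∖i} = E[Y_r | i∉r]`, for any `ε, δ ≥ 0` with
`δε² ≥ (1/(4n))(p/(1-p) + q/(1-p)²)`, at most `δn` indices satisfy `|ŷ - ŷ^{∖i}| > ε`. -/
theorem bagging_stability_main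
    {S : Type*} [Fintype S] (w : S → ℝ) (hw0 : ∀ s, 0 ≤ w s) (hw1 : ∑ s, w s = 1)
    (n : ℕ) (hn : 0 < n) (bag : S → Finset (Fin n))
    (Y : S → ℝ) (hY : ∀ s, Y s ∈ Set.Icc (0 : ℝ) 1)
    (p q : ℝ) (hp01 : p ∈ Set.Ioo (0 : ℝ) 1) (hq : 0 ≤ q)
    (hp : ∀ i : Fin n, ∑ s, w s * (if i ∈ bag s then (1 : ℝ) else 0) = p)
    (hcov : ∀ i j : Fin n, i ≠ j →
      (∑ s, w s * ((if i ∈ bag s then (1 : ℝ) else 0) * (if j ∈ bag s then (1 : ℝ) else 0)))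
        - p * p = -q)
    (ε δ : ℝ) (hε : 0 ≤ ε) (hδ : 0 ≤ δ)
    (hcond : 1 / (4 * n) * (p / (1 - p) + q / (1 - p) ^ 2) ≤ δ * ε ^ 2)
    (yhat : ℝ) (hyhat : yhat = ∑ s, w s * Y s)
    (loo : Fin n → ℝ)
    (hloo : ∀ i, loo i = (∑ s, w s * (if i ∉ bag s then Y s else 0)) / (1 - p)) :
    ((Finset.univ.filter (fun i : Fin n => ε < |yhat - loo i|)).card : ℝ) ≤ δ * n := by
  obtain ⟨hp0, hp1⟩ := hp01
  have h1p : (0:ℝ) < 1 - p := by linarith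
  set A : Fin n → S → ℝ := fun i s => if i ∈ bag s then 1 else 0 with hA
  set c : Fin n → ℝ := fun i => (∑ s, w s * (Y s * A i s)) - p * yhat with hc
  -- diff formula
  have hdiff : ∀ i, yhat - loo i = c i / (1 - p) := by
    intro i
    have key : (∑ s, w s * (if i ∉ bag s then Y s else 0))
        = yhat - ∑ s, w s * (Y s * A i s) := by
      rw [hyhat, ← Finset.sum_sub_distrib]
      apply Finset.sum_congr rfl
      intro s _
      by_cases h : i ∈ bag s <;> simp [hA, h]
    rw [hloo i, key, hc]
    field_simp
    ring
  -- expectations of indicators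
  have hEA : ∀ i, ∑ s, w s * A i s = p := fun i => hp i
  have hAsq : ∀ i s, A i s * A i s = A i s := by
    intro i s; by_cases h : i ∈ bag s <;> simp [hA, h]
  have hEAA : ∀ i j, ∑ s, w s * (A i s * A j s) = if i = j then p else p*p - q := by
    intro i j
    by_cases h : i = j
    · subst h; simp only [if_pos rfl]
      calc ∑ s, w s * (A i s * A i s) = ∑ s, w s * A i s := by
            apply Finset.sum_congr rfl; intro s _; rw [hAsq]
        _ = p := hEA i
    · rw [if_neg h]
      have := hcov i j h
      linarith [this]
  set Sc : ℝ := ∑ i, c i ^ 2 with hSc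
  set T : S → ℝ := fun s => ∑ i, c i * A i s with hT
  have swap : ∀ X : S → ℝ, ∑ s, X s * T s = ∑ i, c i * ∑ s, X s * A i s := by
    intro X
    simp only [hT, Finset.mul_sum]
    rw [Finset.sum_comm]
    apply Finset.sum_congr rfl
    intro i _
    apply Finset.sum_congr rfl
    intro s _; ring
  have hET : ∑ s, w s * T s = p * ∑ i, c i := by
    rw [swap, Finset.mul_sum]
    apply Finset.sum_congr rfl
    intro i _; rw [hEA i]; ring
  have hEYT : ∑ s, (w s * Y s) * T s = Sc + p * yhat * ∑ i, c i := by
    rw [swap, hSc, Finset.mul_sum, ← Finset.sum_add_distrib]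
    apply Finset.sum_congr rfl
    intro i _
    have hws : ∑ s, w s * Y s * A i s = c i + p * yhat := by
      rw [hc]
      have : ∑ s, w s * Y s * A i s = ∑ s, w s * (Y s * A i s) := by
        apply Finset.sum_congr rfl; intro s _; ring
      rw [this]; ring
    rw [hws]; ring
  have hET2 : ∑ s, w s * (T s * T s)
      = p * Sc + (p*p - q) * ((∑ i, c i)^2 - Sc) := by
    have expand : ∀ s, T s * T s = ∑ i, ∑ j, (c i * c j) * (A i s * A j s) := by
      intro s
      simp only [hT, Finset.sum_mul_sum]
      apply Finset.sum_congr rfl; intro i _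
      apply Finset.sum_congr rfl; intro j _; ring
    calc ∑ s, w s * (T s * T s)
        = ∑ s, ∑ i, ∑ j, w s * ((c i * c j) * (A i s * A j s)) := by
          apply Finset.sum_congr rfl; intro s _
          rw [expand s, Finset.mul_sum]
          apply Finset.sum_congr rfl; intro i _
          rw [Finset.mul_sum]
      _ = ∑ i, ∑ j, (c i * c j) * (∑ s, w s * (A i s * A j s)) := by
          rw [Finset.sum_comm]
          apply Finset.sum_congr rfl; intro i _
          rw [Finset.sum_comm]
          apply Finset.sum_congr rfl; intro j _
          rw [Finset.mul_sum]
          apply Finset.sum_congr rfl; intro s _; ring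
      _ = ∑ i, ∑ j, (c i * c j) * (if i = j then p else p*p - q) := by
          apply Finset.sum_congr rfl; intro i _
          apply Finset.sum_congr rfl; intro j _
          rw [hEAA]
      _ = ∑ i, ∑ j, ((c i * c j) * (p*p-q) + (if i = j then (c i * c j) * (p - (p*p-q)) else 0)) := by
          apply Finset.sum_congr rfl; intro i _
          apply Finset.sum_congr rfl; intro j _
          by_cases h : i = j <;> simp [h] <;> ring
      _ = p * Sc + (p*p - q) * ((∑ i, c i)^2 - Sc) := by
          simp only [Finset.sum_add_distrib, Finset.sum_ite_eq, Finset.mem_univ, if_pos]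
          have h2 : (∑ i, c i)^2 = ∑ i : Fin n, ∑ j : Fin n, c i * c j := by
            rw [sq, Finset.sum_mul_sum]
          have h3 : ∑ i : Fin n, ∑ j : Fin n, c i * c j * (p*p-q)
              = (∑ i : Fin n, ∑ j : Fin n, c i * c j) * (p*p-q) := by
            rw [Finset.sum_mul]
            apply Finset.sum_congr rfl; intro i _; rw [Finset.sum_mul]
          have h4 : ∑ i : Fin n, c i * c i * (p - (p*p-q)) = Sc * (p - (p*p-q)) := by
            rw [hSc, Finset.sum_mul]
            apply Finset.sum_congr rfl; intro i _; ring
          rw [h3, h4, ← h2]; ring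
  -- variance bounds
  have hVarY : ∑ s, w s * (Y s - yhat)^2 ≤ 1/4 := by
    have e1 : ∑ s, w s * (Y s - yhat)^2
        = ∑ s, w s * (Y s * Y s) - 2*yhat*(∑ s, w s * Y s) + yhat^2 * (∑ s, w s) := by
      rw [Finset.mul_sum, Finset.mul_sum, ← Finset.sum_sub_distrib, ← Finset.sum_add_distrib]
      apply Finset.sum_congr rfl; intro s _; ring
    rw [e1, hw1, ← hyhat]
    have hYY : ∑ s, w s * (Y s * Y s) ≤ yhat := by
      rw [hyhat]
      apply Finset.sum_le_sum; intro s _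
      obtain ⟨h0, h1⟩ := hY s
      nlinarith [mul_nonneg (hw0 s) (mul_nonneg h0 (sub_nonneg.2 h1))]
    nlinarith [sq_nonneg (yhat - 1/2)]
  set ET : ℝ := p * ∑ i, c i with hETdef
  have hVarT : ∑ s, w s * (T s - ET)^2 ≤ (p*(1-p)+q) * Sc := by
    have e1 : ∑ s, w s * (T s - ET)^2
        = ∑ s, w s * (T s * T s) - 2*ET*(∑ s, w s * T s) + ET^2 * (∑ s, w s) := by
      rw [Finset.mul_sum, Finset.mul_sum, ← Finset.sum_sub_distrib, ← Finset.sum_add_distrib]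
      apply Finset.sum_congr rfl; intro s _; ring
    rw [e1, hw1, hET, hET2, hETdef]
    nlinarith [sq_nonneg (∑ i, c i), hq]
  have hCovYT : ∑ s, w s * ((Y s - yhat) * (T s - ET)) = Sc := by
    have e1 : ∑ s, w s * ((Y s - yhat) * (T s - ET))
        = ∑ s, (w s * Y s) * T s - yhat * (∑ s, w s * T s)
          - ET * (∑ s, w s * Y s) + yhat * ET * (∑ s, w s) := by
      rw [Finset.mul_sum, Finset.mul_sum, Finset.mul_sum,
        ← Finset.sum_sub_distrib, ← Finset.sum_sub_distrib, ← Finset.sum_add_distrib]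
      apply Finset.sum_congr rfl; intro s _; ring
    rw [e1, hw1, hET, hEYT, ← hyhat, hETdef]
    ring
  -- Cauchy-Schwarz
  have hCS : Sc^2 ≤ (∑ s, w s * (Y s - yhat)^2) * (∑ s, w s * (T s - ET)^2) := by
    rw [← hCovYT]
    apply Finset.sum_sq_le_sum_mul_sum_of_sq_eq_mul
    · intro s _; exact mul_nonneg (hw0 s) (sq_nonneg _)
    · intro s _; exact mul_nonneg (hw0 s) (sq_nonneg _)
    · intro s _; ring
  have hSc0 : 0 ≤ Sc := Finset.sum_nonneg fun i _ => sq_nonneg _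
  have hVarT0 : 0 ≤ ∑ s, w s * (T s - ET)^2 :=
    Finset.sum_nonneg fun s _ => mul_nonneg (hw0 s) (sq_nonneg _)
  have hScle : Sc ≤ (p*(1-p)+q)/4 := by
    have h4 : Sc^2 ≤ 1/4 * ((p*(1-p)+q) * Sc) := by
      calc Sc^2 ≤ (∑ s, w s * (Y s - yhat)^2) * (∑ s, w s * (T s - ET)^2) := hCS
        _ ≤ 1/4 * ((p*(1-p)+q)*Sc) := by
            apply mul_le_mul hVarY hVarT hVarT0 (by norm_num)
    rcases eq_or_lt_of_le hSc0 with h | h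
    · rw [← h]
      have : 0 ≤ p*(1-p)+q := by nlinarith
      linarith
    · nlinarith [h4]
  -- counting
  set F := Finset.univ.filter (fun i : Fin n => ε < |yhat - loo i|) with hF
  have hcount : (F.card : ℝ) * ε^2 ≤ Sc / (1-p)^2 := by
    have e0 : (F.card : ℝ) * ε^2 = ∑ _i ∈ F, ε^2 := by
      rw [Finset.sum_const, nsmul_eq_mul]
    rw [e0]
    calc ∑ i ∈ F, ε^2 ≤ ∑ i ∈ F, (c i / (1-p))^2 := by
          apply Finset.sum_le_sum; intro i hi
          have hi2 := (Finset.mem_filter.mp hi).2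
          rw [hdiff i] at hi2
          have habs : ε < |c i| / (1-p) := by
            rwa [abs_div, abs_of_pos h1p] at hi2
          have h1 : ε^2 ≤ (|c i|/(1-p))^2 := by
            have h0 : 0 ≤ |c i|/(1-p) := div_nonneg (abs_nonneg _) h1p.le
            nlinarith
          calc ε^2 ≤ (|c i|/(1-p))^2 := h1
            _ = (c i/(1-p))^2 := by rw [div_pow, div_pow, sq_abs]
      _ ≤ ∑ i, (c i/(1-p))^2 :=
          Finset.sum_le_sum_of_subset_of_nonneg (Finset.filter_subset _ _)
            (fun i _ _ => sq_nonneg _)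
      _ = Sc / (1-p)^2 := by
          rw [hSc, Finset.sum_div]
          apply Finset.sum_congr rfl; intro i _; rw [div_pow]
  have hn' : (0:ℝ) < n := by exact_mod_cast hn
  have hrhs : Sc/(1-p)^2 ≤ (n:ℝ) * (δ * ε^2) := by
    have hX : p/(1-p) + q/(1-p)^2 ≤ 4 * (n:ℝ) * (δ * ε^2) := by
      have h5 : (4*(n:ℝ)) * (1 / (4 * n) * (p / (1 - p) + q / (1 - p) ^ 2))
          ≤ (4*(n:ℝ)) * (δ * ε^2) :=
        mul_le_mul_of_nonneg_left hcond (by positivity)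
      have h6 : (4*(n:ℝ)) * (1 / (4 * n) * (p / (1 - p) + q / (1 - p) ^ 2))
          = p/(1-p) + q/(1-p)^2 := by
        field_simp
      linarith
    have hstep : Sc/(1-p)^2 ≤ ((p*(1-p)+q)/4) / (1-p)^2 := by
      gcongr
    have heq : ((p*(1-p)+q)/4) / (1-p)^2 = (p/(1-p)+q/(1-p)^2)/4 := by
      field_simp
    linarith
  rcases eq_or_lt_of_le hε with hε0 | hεpos
  · exfalso
    have h1 : 0 < p/(1-p) := div_pos hp0 h1p
    have h2 : 0 ≤ q/(1-p)^2 := by positivity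
    have h3 : 0 < 1/(4*(n:ℝ)) := by positivity
    have h4 : 0 < 1 / (4 * (n:ℝ)) * (p / (1 - p) + q / (1 - p) ^ 2) :=
      mul_pos h3 (by linarith)
    rw [← hε0] at hcond
    have h5 : δ * (0:ℝ)^2 = 0 := by ring
    rw [h5] at hcond
    linarith
  · have hfin : (F.card:ℝ) * ε^2 ≤ (n:ℝ)*(δ*ε^2) := hcount.trans hrhs
    have hε2 : 0 < ε^2 := by positivity
    have hmul : (F.card:ℝ) * ε^2 ≤ δ*(n:ℝ)*ε^2 := by linarith
    have := le_of_mul_le_mul_right hmul hε2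
    rw [hF] at this
    linarith
end

section
/- In the setting of the main bagging stability bound, since q ≤ p(1-p)/(n-1), the stability condition δε² ≥ (1/(4(n-1)))·(p/(1-p)) suffices to guarantee that at most δn indices i ∈ [n] satisfy |ŷ - ŷ^{∖i}| > ε. -/
set_option maxHeartbeats 1000000 in
/-- In the setting of the main bagging stability bound, since
`q ≤ p(1-p)/(n-1)`, the simplified condition `δε² ≥ (1/(4(n-1)))·(p/(1-p))` suffices to
guarantee that at most `δn` indices `i ∈ [n]` satisfy `|ŷ - ŷ^{∖i}| > ε`. -/
theorem bagging_stability_simplified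
    {S : Type*} [Fintype S] (w : S → ℝ) (hw0 : ∀ s, 0 ≤ w s) (hw1 : ∑ s, w s = 1)
    (n : ℕ) (hn : 2 ≤ n) (bag : S → Finset (Fin n))
    (Y : S → ℝ) (hY : ∀ s, Y s ∈ Set.Icc (0 : ℝ) 1)
    (p q : ℝ) (hp01 : p ∈ Set.Ioo (0 : ℝ) 1) (hq : 0 ≤ q)
    (hqle : q ≤ p * (1 - p) / (n - 1))
    (hp : ∀ i : Fin n, ∑ s, w s * (if i ∈ bag s then (1 : ℝ) else 0) = p)
    (hcov : ∀ i j : Fin n, i ≠ j →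
      (∑ s, w s * ((if i ∈ bag s then (1 : ℝ) else 0) * (if j ∈ bag s then (1 : ℝ) else 0)))
        - p * p = -q)
    (ε δ : ℝ) (hε : 0 ≤ ε) (hδ : 0 ≤ δ)
    (hcond : 1 / (4 * (n - 1)) * (p / (1 - p)) ≤ δ * ε ^ 2)
    (yhat : ℝ) (hyhat : yhat = ∑ s, w s * Y s)
    (loo : Fin n → ℝ)
    (hloo : ∀ i, loo i = (∑ s, w s * (if i ∉ bag s then Y s else 0)) / (1 - p)) :
    ((Finset.univ.filter (fun i : Fin n => ε < |yhat - loo i|)).card : ℝ) ≤ δ * n := by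
  obtain ⟨hp0, hp1⟩ := hp01
  have h1p : (0:ℝ) < 1 - p := by linarith
  have hd1 : (1:ℝ) ≤ (n:ℝ) - 1 := by
    have : (2:ℝ) ≤ (n:ℝ) := by exact_mod_cast hn
    linarith
  set d : ℝ := (n:ℝ) - 1 with hd
  have hnd : (n:ℝ) = d + 1 := by rw [hd]; ring
  -- notation
  set X : Fin n → S → ℝ := fun i s => if i ∈ bag s then 1 else 0 with hX
  set μ : ℝ := ∑ s, w s * Y s with hμ
  set C : Fin n → ℝ := fun i => (∑ s, w s * (X i s * Y s)) - p * μ with hC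
  have hpX : ∀ i, ∑ s, w s * X i s = p := fun i => hp i
  have hXsq : ∀ i s, X i s * X i s = X i s := by
    intro i s
    by_cases h : i ∈ bag s <;> simp [hX, h]
  -- covariance representation
  have hCrep : ∀ i, ∑ s, w s * ((Y s - μ) * (X i s - p)) = C i := by
    intro i
    have e1 : ∀ s, w s * ((Y s - μ) * (X i s - p))
        = w s * (X i s * Y s) - p * (w s * Y s) - μ * (w s * X i s) + (μ * p) * w s := by
      intro s; ring
    simp_rw [e1]
    rw [Finset.sum_add_distrib, Finset.sum_sub_distrib, Finset.sum_sub_distrib,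
      ← Finset.mul_sum, ← Finset.mul_sum, ← Finset.mul_sum, hpX i, ← hμ, hw1, hC]
    ring
  -- difference formula
  have hdiff : ∀ i, yhat - loo i = C i / (1 - p) := by
    intro i
    have e2 : (∑ s, w s * (if i ∉ bag s then Y s else 0))
        = μ - ∑ s, w s * (X i s * Y s) := by
      rw [hμ, ← Finset.sum_sub_distrib]
      apply Finset.sum_congr rfl
      intro s _
      by_cases h : i ∈ bag s <;> simp [hX, h]
    rw [hloo i, e2, hyhat]
    simp only [hC]
    field_simp
    ring
  -- inner products of centered indicators
  have hXX : ∀ i j : Fin n, ∑ s, w s * ((X i s - p) * (X j s - p))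
      = if i = j then p * (1 - p) else -q := by
    intro i j
    have e1 : ∀ s, w s * ((X i s - p) * (X j s - p))
        = w s * (X i s * X j s) - p * (w s * X j s) - p * (w s * X i s) + (p * p) * w s := by
      intro s; ring
    simp_rw [e1]
    rw [Finset.sum_add_distrib, Finset.sum_sub_distrib, Finset.sum_sub_distrib,
      ← Finset.mul_sum, ← Finset.mul_sum, ← Finset.mul_sum, hpX i, hpX j, hw1]
    by_cases h : i = j
    · subst h
      simp_rw [hXsq i]
      rw [hpX i]
      simp only [if_true, eq_self_iff_true, ite_true]
      ring
    · have := hcov i j h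
      simp only [if_neg h]
      have hXij : ∑ s, w s * (X i s * X j s) = p * p - q := by
        have : (∑ s, w s * (X i s * X j s)) - p * p = -q := hcov i j h
        linarith
      rw [hXij]; ring
  set G : S → ℝ := fun s => ∑ i, C i * (X i s - p) with hG
  set S2 : ℝ := ∑ i, (C i) ^ 2 with hS2
  have hS2nn : 0 ≤ S2 := Finset.sum_nonneg fun i _ => sq_nonneg _
  -- step a : cross term equals S2
  have hstepa : ∑ s, w s * ((Y s - μ) * G s) = S2 := by
    have : ∀ s, w s * ((Y s - μ) * G s)
        = ∑ i, C i * (w s * ((Y s - μ) * (X i s - p))) := by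
      intro s
      rw [hG, Finset.mul_sum, Finset.mul_sum]
      apply Finset.sum_congr rfl
      intro i _; ring
    simp_rw [this]
    rw [Finset.sum_comm]
    rw [hS2]
    apply Finset.sum_congr rfl
    intro i _
    rw [← Finset.mul_sum, hCrep i]
    ring
  -- step b : variance of G
  have hstepb : ∑ s, w s * (G s) ^ 2 ≤ (p * (1 - p) + q) * S2 := by
    have e1 : ∑ s, w s * (G s) ^ 2
        = ∑ i, ∑ j, C i * C j * (∑ s, w s * ((X i s - p) * (X j s - p))) := by
      have e0 : ∀ s, w s * (G s) ^ 2
          = ∑ i, ∑ j, C i * C j * (w s * ((X i s - p) * (X j s - p))) := by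
        intro s
        rw [hG, sq, Finset.sum_mul_sum]
        rw [Finset.mul_sum]
        apply Finset.sum_congr rfl
        intro i _
        rw [Finset.mul_sum]
        apply Finset.sum_congr rfl
        intro j _; ring
      simp_rw [e0]
      rw [Finset.sum_comm]
      apply Finset.sum_congr rfl
      intro i _
      rw [Finset.sum_comm]
      apply Finset.sum_congr rfl
      intro j _
      rw [← Finset.mul_sum]
    rw [e1]
    simp_rw [hXX]
    have e2 : ∀ i j : Fin n, C i * C j * (if i = j then p * (1 - p) else -q)
        = C i * C j * (-q) + (if j = i then C i * C j * (p * (1 - p) + q) else 0) := by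
      intro i j
      by_cases h : i = j
      · subst h; simp; ring
      · have h' : j ≠ i := fun hh => h hh.symm
        simp [h, h']
    simp_rw [e2]
    have a1 : ∑ i : Fin n, ∑ j : Fin n, C i * C j * (-q)
        = (-q) * ((∑ i, C i) * (∑ j, C j)) := by
      rw [Finset.sum_mul_sum, Finset.mul_sum]
      apply Finset.sum_congr rfl
      intro i _
      rw [Finset.mul_sum]
      apply Finset.sum_congr rfl
      intro j _; ring
    have a2 : ∑ i : Fin n, ∑ j : Fin n, (if j = i then C i * C j * (p * (1 - p) + q) else 0)
        = (p * (1 - p) + q) * S2 := by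
      have a0 : ∀ i : Fin n, ∑ j : Fin n, (if j = i then C i * C j * (p * (1 - p) + q) else 0)
          = C i * C i * (p * (1 - p) + q) := by
        intro i
        rw [Finset.sum_ite_eq']
        simp
      simp_rw [a0]
      rw [hS2, Finset.mul_sum]
      apply Finset.sum_congr rfl
      intro i _; ring
    calc ∑ i : Fin n, ∑ j : Fin n, (C i * C j * (-q) +
        (if j = i then C i * C j * (p * (1 - p) + q) else 0))
        = (-q) * ((∑ i, C i) * (∑ j, C j)) + (p * (1 - p) + q) * S2 := by
          simp_rw [Finset.sum_add_distrib]
          rw [a1, a2]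
      _ ≤ (p * (1 - p) + q) * S2 := by
          nlinarith [mul_self_nonneg (∑ i, C i), hq]
  -- variance of Y
  have hstepc : ∑ s, w s * (Y s - μ) ^ 2 ≤ 1 / 4 := by
    have e1 : ∑ s, w s * (Y s - μ) ^ 2 = (∑ s, w s * (Y s)^2) - μ ^ 2 := by
      have e0 : ∀ s, w s * (Y s - μ) ^ 2
          = w s * (Y s)^2 - 2 * μ * (w s * Y s) + μ^2 * w s := by
        intro s; ring
      simp_rw [e0]
      rw [Finset.sum_add_distrib, Finset.sum_sub_distrib, ← Finset.mul_sum,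
        ← Finset.mul_sum, ← hμ, hw1]
      ring
    have e2 : ∑ s, w s * (Y s)^2 ≤ μ := by
      rw [hμ]
      apply Finset.sum_le_sum
      intro s _
      have := hY s
      have h1 : Y s ^ 2 ≤ Y s := by nlinarith [this.1, this.2]
      exact mul_le_mul_of_nonneg_left h1 (hw0 s)
    rw [e1]
    nlinarith [sq_nonneg (μ - 1/2)]
  -- Cauchy-Schwarz
  have hCS : S2 ^ 2 ≤ (∑ s, w s * (Y s - μ) ^ 2) * (∑ s, w s * (G s) ^ 2) := by
    have := Finset.sum_mul_sq_le_sq_mul_sq Finset.univ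
      (fun s => Real.sqrt (w s) * (Y s - μ)) (fun s => Real.sqrt (w s) * G s)
    have e1 : ∀ s : S, (Real.sqrt (w s) * (Y s - μ)) * (Real.sqrt (w s) * G s)
        = w s * ((Y s - μ) * G s) := by
      intro s
      calc (Real.sqrt (w s) * (Y s - μ)) * (Real.sqrt (w s) * G s)
          = (Real.sqrt (w s) * Real.sqrt (w s)) * ((Y s - μ) * G s) := by ring
        _ = w s * ((Y s - μ) * G s) := by rw [Real.mul_self_sqrt (hw0 s)]
    have e2 : ∀ s : S, (Real.sqrt (w s) * (Y s - μ)) ^ 2 = w s * (Y s - μ) ^ 2 := by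
      intro s
      rw [mul_pow, Real.sq_sqrt (hw0 s)]
    have e3 : ∀ s : S, (Real.sqrt (w s) * G s) ^ 2 = w s * (G s) ^ 2 := by
      intro s
      rw [mul_pow, Real.sq_sqrt (hw0 s)]
    simp_rw [e1, e2, e3] at this
    rwa [hstepa] at this
  have hGnn : 0 ≤ ∑ s, w s * (G s) ^ 2 :=
    Finset.sum_nonneg fun s _ => mul_nonneg (hw0 s) (sq_nonneg _)
  have hAnn : 0 ≤ ∑ s, w s * (Y s - μ) ^ 2 :=
    Finset.sum_nonneg fun s _ => mul_nonneg (hw0 s) (sq_nonneg _)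
  -- combine : S2 ≤ (1/4)(p(1-p)+q)
  have hS2bound : S2 ≤ 1 / 4 * (p * (1 - p) + q) := by
    have h1 : S2 ^ 2 ≤ 1 / 4 * ((p * (1 - p) + q) * S2) := by
      calc S2 ^ 2 ≤ (∑ s, w s * (Y s - μ) ^ 2) * (∑ s, w s * (G s) ^ 2) := hCS
        _ ≤ 1 / 4 * (∑ s, w s * (G s) ^ 2) := by
            apply mul_le_mul_of_nonneg_right hstepc hGnn
        _ ≤ 1 / 4 * ((p * (1 - p) + q) * S2) := by
            apply mul_le_mul_of_nonneg_left hstepb (by norm_num)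
    rcases le_or_gt S2 (1 / 4 * (p * (1 - p) + q)) with h | h
    · exact h
    · have hc : 0 ≤ p * (1 - p) + q := by nlinarith [hp0, hp1, hq]
      have hS2pos : 0 < S2 := by linarith
      nlinarith [mul_lt_mul_of_pos_right h hS2pos]
  -- counting
  set F := Finset.univ.filter (fun i : Fin n => ε < |yhat - loo i|) with hF
  have hptwise : ∀ i ∈ F, ε ^ 2 * (1 - p) ^ 2 ≤ (C i) ^ 2 := by
    intro i hi
    have hi' : ε < |yhat - loo i| := (Finset.mem_filter.mp hi).2
    rw [hdiff i] at hi'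
    rw [abs_div, abs_of_pos h1p] at hi'
    have h2 : ε * (1 - p) < |C i| := by
      rw [lt_div_iff₀ h1p] at hi'
      exact hi'
    have h3 : (ε * (1 - p)) ^ 2 ≤ |C i| ^ 2 := by
      apply pow_le_pow_left₀ (mul_nonneg hε (le_of_lt h1p)) (le_of_lt h2)
    rw [sq_abs] at h3
    nlinarith [h3]
  have hcount : (F.card : ℝ) * (ε ^ 2 * (1 - p) ^ 2) ≤ S2 := by
    calc (F.card : ℝ) * (ε ^ 2 * (1 - p) ^ 2)
        ≤ ∑ i ∈ F, (C i) ^ 2 := by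
          rw [← nsmul_eq_mul, ← Finset.sum_const]
          exact Finset.sum_le_sum hptwise
      _ ≤ S2 := by
          rw [hS2]
          apply Finset.sum_le_sum_of_subset_of_nonneg (Finset.subset_univ F)
          intro i _ _
          exact sq_nonneg _
  -- arithmetic
  have hd0 : (0:ℝ) < d := by linarith
  have hεpos : 0 < ε ^ 2 := by
    by_contra h
    push_neg at h
    have hε0 : ε ^ 2 = 0 := le_antisymm h (sq_nonneg ε)
    rw [hε0, mul_zero] at hcond
    have : 0 < 1 / (4 * d) * (p / (1 - p)) := by positivity
    linarith
  have hqd : q * d ≤ p * (1 - p) := by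
    have := (le_div_iff₀ hd0).mp hqle
    linarith
  have hpcond : p * (1 - p) ≤ 4 * d * (1 - p) ^ 2 * (δ * ε ^ 2) := by
    have h1 : 1 / (4 * d) * (p / (1 - p)) ≤ δ * ε ^ 2 := hcond
    have h2 : p / (1 - p) ≤ 4 * d * (δ * ε ^ 2) := by
      rw [div_mul_eq_mul_div, div_le_iff₀ (by positivity : (0:ℝ) < 4 * d)] at h1
      linarith [h1]
    rw [div_le_iff₀ h1p] at h2
    nlinarith [h2, h1p]
  -- finish
  have hN : (F.card : ℝ) * (4 * d * (1 - p) ^ 2 * ε ^ 2) ≤ δ * (d + 1) * (4 * d * (1 - p) ^ 2 * ε ^ 2) := by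
    have h1 : (F.card : ℝ) * (ε ^ 2 * (1 - p) ^ 2) * (4 * d) ≤ (p * (1 - p) + q) * d := by
      nlinarith [hS2bound, hcount, hd0]
    have h2 : (p * (1 - p) + q) * d ≤ p * (1 - p) * (d + 1) := by nlinarith [hqd]
    have h3 : p * (1 - p) * (d + 1) ≤ 4 * d * (1 - p) ^ 2 * (δ * ε ^ 2) * (d + 1) := by
      nlinarith [hpcond, hd1]
    nlinarith [h1, h2, h3]
  have hK : (0:ℝ) < 4 * d * (1 - p) ^ 2 * ε ^ 2 := by positivity
  have := le_of_mul_le_mul_right hN hK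
  rw [hF] at this ⊢
  rw [hnd]
  linarith [this]
end

section
/- Let H ∼ HyperGeometric with population size n-1, K-1 successes, and m draws, and let H' ∼ HyperGeometric with population size n-2, K-1 successes, and m-1 draws, where 1 ≤ m < n and 1 ≤ K ≤ n, and let h = ⌊mK/n⌋. Then (m(1 - K/n)/(n-1))·P{H' = h} = ((m - h)/n)·P{H = h}. -/
/-- hypergeometric identity: with `H ∼ HyperGeometric(n-1, K-1, m)` and
`H' ∼ HyperGeometric(n-2, K-1, m-1)`, `1 ≤ m < n`, `1 ≤ K ≤ n`, and `h = ⌊mK/n⌋`,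
`(m(1 - K/n)/(n-1))·P{H' = h} = ((m - h)/n)·P{H = h}`, where
`P{HyperGeometric(N,K,m) = h} = C(K,h)·C(N-K,m-h)/C(N,m)`. -/
theorem hypergeometric_identity
    (n m K : ℕ) (hm : 1 ≤ m) (hmn : m < n) (hK : 1 ≤ K) (hKn : K ≤ n)
    (h : ℕ) (hh : h = m * K / n) :
    (m : ℝ) * (1 - (K : ℝ) / n) / ((n : ℝ) - 1) *
      ((((K - 1).choose h * ((n - 2) - (K - 1)).choose ((m - 1) - h) : ℕ) : ℝ)
        / ((n - 2).choose (m - 1)))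
    = ((m : ℝ) - h) / n *
      ((((K - 1).choose h * ((n - 1) - (K - 1)).choose (m - h) : ℕ) : ℝ)
        / ((n - 1).choose m)) := by
  have hn2 : 2 ≤ n := lt_of_le_of_lt hm hmn
  have hnR : (n : ℝ) ≠ 0 := by positivity
  by_cases hKeq : K = n
  · -- both sides vanish
    have hh' : h = m := by
      rw [hh, hKeq, Nat.mul_div_cancel m (by omega)]
    have h1 : (1 : ℝ) - (K : ℝ) / n = 0 := by
      rw [hKeq]; field_simp; norm_num
    have h2 : (m : ℝ) - (h : ℝ) = 0 := by rw [hh']; ring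
    rw [h1, h2]; ring
  · have hKlt : K < n := lt_of_le_of_ne hKn hKeq
    have hhm : h < m := by
      rw [hh]
      refine Nat.div_lt_of_lt_mul ?_
      calc m * K < m * n := Nat.mul_lt_mul_of_pos_left hKlt hm
        _ = n * m := Nat.mul_comm m n
    -- simplify nat subtraction indices
    have e1 : (n - 2) - (K - 1) = n - K - 1 := by omega
    have e2 : (m - 1) - h = m - h - 1 := by omega
    have e3 : (n - 1) - (K - 1) = n - K := by omega
    rw [e1, e2, e3]
    -- key nat identities
    have gen : ∀ a b : ℕ, (a + 1) * a.choose b = (b + 1) * (a + 1).choose (b + 1) := by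
      intro a b
      simpa [Nat.succ_eq_add_one, Nat.mul_comm] using Nat.add_one_mul_choose_eq a b
    have key1 : (n - K) * ((n - K - 1).choose (m - h - 1)) = (m - h) * ((n - K).choose (m - h)) := by
      obtain ⟨a, ha⟩ : ∃ a, n - K = a + 1 := ⟨n - K - 1, by omega⟩
      obtain ⟨b, hb⟩ : ∃ b, m - h = b + 1 := ⟨m - h - 1, by omega⟩
      have h1 : n - K - 1 = a := by omega
      have h2 : m - h - 1 = b := by omega
      rw [ha, hb]; simpa using gen a b
    have key2 : m * ((n - 1).choose m) = (n - 1) * ((n - 2).choose (m - 1)) := by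
      obtain ⟨a, ha⟩ : ∃ a, n - 1 = a + 1 := ⟨n - 2, by omega⟩
      obtain ⟨b, hb⟩ : ∃ b, m = b + 1 := ⟨m - 1, by omega⟩
      have h1 : n - 2 = a := by omega
      have h2 : m - 1 = b := by omega
      rw [ha, hb, h1]; simpa using (gen a b).symm
    have natkey : m * (n - K) * ((K - 1).choose h * ((n - K - 1).choose (m - h - 1))) * ((n - 1).choose m)
        = (m - h) * ((K - 1).choose h * ((n - K).choose (m - h))) * ((n - 1) * ((n - 2).choose (m - 1))) := by
      calc m * (n - K) * ((K - 1).choose h * ((n - K - 1).choose (m - h - 1))) * ((n - 1).choose m)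
          = ((n - K) * ((n - K - 1).choose (m - h - 1))) * (m * ((n - 1).choose m)) * ((K - 1).choose h) := by ring
        _ = ((m - h) * ((n - K).choose (m - h))) * ((n - 1) * ((n - 2).choose (m - 1))) * ((K - 1).choose h) := by
            rw [key1, key2]
        _ = _ := by ring
    have rkey : (m : ℝ) * ((n : ℝ) - K) * (((K - 1).choose h : ℝ) * (((n - K - 1).choose (m - h - 1)) : ℝ)) * (((n - 1).choose m : ℝ))
        = ((m : ℝ) - h) * (((K - 1).choose h : ℝ) * (((n - K).choose (m - h)) : ℝ)) * (((n : ℝ) - 1) * (((n - 2).choose (m - 1)) : ℝ)) := by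
      have := congrArg (fun x : ℕ => (x : ℝ)) natkey
      push_cast [Nat.cast_sub hKn, Nat.cast_sub (le_of_lt hhm), Nat.cast_sub (by omega : 1 ≤ n)] at this
      linarith [this]
    have hC1 : (((n - 2).choose (m - 1) : ℕ) : ℝ) ≠ 0 :=
      Nat.cast_ne_zero.mpr (Nat.choose_pos (by omega : m - 1 ≤ n - 2)).ne'
    have hC2 : (((n - 1).choose m : ℕ) : ℝ) ≠ 0 :=
      Nat.cast_ne_zero.mpr (Nat.choose_pos (by omega : m ≤ n - 1)).ne'
    have hn1R : (n : ℝ) - 1 ≠ 0 := by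
      have : (1:ℝ) < n := by exact_mod_cast (by omega : 1 < n)
      linarith
    have hKR : (1:ℝ) - (K:ℝ)/n = ((n:ℝ) - K)/n := by field_simp
    rw [hKR]
    push_cast
    field_simp
    linear_combination rkey
end

section
/- Fix n > m ≥ 1 and δ ∈ (0, 1/2). There exists a base algorithm A (with outputs in [0,1]) such that derandomized subbagging of A with bags of size m out of n is not (ε, δ)-stable for any ε < (1 - δ - 1/n)·p·P{H = ⌊p(1+⌊nδ⌋)⌋}, where p = m/n and H ∼ HyperGeometric(n-1, ⌊nδ⌋, m). -/
lemma hyper_count {α : Type*} [DecidableEq α] (U S : Finset α) (hSU : S ⊆ U)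
    (m k : ℕ) (hk : k ≤ m) :
    ((U.powersetCard m).filter (fun A => (A ∩ S).card = k)).card
      = S.card.choose k * (U \ S).card.choose (m - k) := by
  have : ((U.powersetCard m).filter (fun A => (A ∩ S).card = k)).card
      = ((S.powersetCard k) ×ˢ ((U \ S).powersetCard (m - k))).card := by
    refine Finset.card_bij' (fun A _ => (A ∩ S, A \ S)) (fun P _ => P.1 ∪ P.2) ?_ ?_ ?_ ?_
    · rintro A hA
      simp only [Finset.mem_filter, Finset.mem_powersetCard] at hA
      obtain ⟨⟨hAU, hAc⟩, hAS⟩ := hA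
      simp only [Finset.mem_product, Finset.mem_powersetCard]
      refine ⟨⟨Finset.inter_subset_right, hAS⟩, ?_, ?_⟩
      · exact fun x hx => by
          simp only [Finset.mem_sdiff] at hx ⊢
          exact ⟨hAU hx.1, hx.2⟩
      · have h := Finset.card_sdiff_add_card_inter A S
        omega
    · rintro ⟨B, C⟩ hP
      simp only [Finset.mem_product, Finset.mem_powersetCard] at hP
      obtain ⟨⟨hBS, hBc⟩, hCU, hCc⟩ := hP
      have hdisj : Disjoint B C := by
        refine Finset.disjoint_left.mpr fun x hxB hxC => ?_
        exact (Finset.mem_sdiff.mp (hCU hxC)).2 (hBS hxB)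
      simp only [Finset.mem_filter, Finset.mem_powersetCard]
      refine ⟨⟨?_, ?_⟩, ?_⟩
      · exact Finset.union_subset (hBS.trans hSU) (hCU.trans (Finset.sdiff_subset))
      · rw [Finset.card_union_of_disjoint hdisj, hBc, hCc]; omega
      · have : (B ∪ C) ∩ S = B := by
          ext x
          simp only [Finset.mem_inter, Finset.mem_union]
          constructor
          · rintro ⟨hx | hx, hxS⟩
            · exact hx
            · exact absurd hxS (Finset.mem_sdiff.mp (hCU hx)).2
          · exact fun hx => ⟨Or.inl hx, hBS hx⟩
        rw [this, hBc]
    · rintro A hA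
      simp only
      ext x
      simp only [Finset.mem_union, Finset.mem_inter, Finset.mem_sdiff]
      tauto
    · rintro ⟨B, C⟩ hP
      simp only [Finset.mem_product, Finset.mem_powersetCard] at hP
      obtain ⟨⟨hBS, hBc⟩, hCU, hCc⟩ := hP
      have h1 : (B ∪ C) ∩ S = B := by
        ext x
        simp only [Finset.mem_inter, Finset.mem_union]
        constructor
        · rintro ⟨hx | hx, hxS⟩
          · exact hx
          · exact absurd hxS (Finset.mem_sdiff.mp (hCU hx)).2
        · exact fun hx => ⟨Or.inl hx, hBS hx⟩
      have h2 : (B ∪ C) \ S = C := by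
        ext x
        simp only [Finset.mem_sdiff, Finset.mem_union]
        constructor
        · rintro ⟨hx | hx, hxS⟩
          · exact absurd (hBS hx) hxS
          · exact hx
        · exact fun hx => ⟨Or.inr hx, (Finset.mem_sdiff.mp (hCU hx)).2⟩
      simp [h1, h2]
  rw [this, Finset.card_product, Finset.card_powersetCard, Finset.card_powersetCard]

lemma tail_count {α : Type*} [DecidableEq α] (U S : Finset α) (hSU : S ⊆ U) (m j : ℕ) :
    ((U.powersetCard m).filter (fun A => j < (A ∩ S).card)).card
      = ∑ k ∈ Finset.Ioc j m, S.card.choose k * (U \ S).card.choose (m - k) := by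
  rw [Finset.card_eq_sum_card_fiberwise (f := fun A => (A ∩ S).card) (t := Finset.Ioc j m) ?_]
  · refine Finset.sum_congr rfl fun k hk => ?_
    rw [Finset.mem_Ioc] at hk
    rw [Finset.filter_filter, ← hyper_count U S hSU m k hk.2]
    congr 1
    apply Finset.filter_congr
    intro A hA
    constructor
    · rintro ⟨_, h⟩; exact h
    · intro h; exact ⟨h ▸ hk.1, h⟩
  · intro A hA
    rw [Finset.mem_coe, Finset.mem_filter, Finset.mem_powersetCard] at hA
    rw [Finset.mem_coe, Finset.mem_Ioc]
    refine ⟨hA.2, ?_⟩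
    calc (A ∩ S).card ≤ A.card := Finset.card_le_card Finset.inter_subset_left
    _ = m := hA.1.2

lemma term_id (n m K k : ℕ) (hk1 : 1 ≤ k) (hkm : k ≤ m) (hmn : m < n) (hK1 : 1 ≤ K)
    (hKn : K ≤ n) :
    (n-m)*(K.choose k)*((n-K).choose (m-k)) + (m-k)*((K-1).choose k)*((n-K).choose (m-k))
    = n*((K-1).choose k)*((n-K).choose (m-k))
      + (m+1-k)*((K-1).choose (k-1))*((n-K).choose (m+1-k)) := by
  set a := (K-1).choose (k-1) with ha_def
  set b := (K-1).choose k with hb_def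
  set c := (n-K).choose (m-k) with hc_def
  set d := (n-K).choose (m+1-k) with hd_def
  have pascal : K.choose k = a + b := by
    have h1 : K = (K-1)+1 := by omega
    have h2 : k = (k-1)+1 := by omega
    rw [h1, h2, Nat.choose_succ_succ, ha_def, hb_def]
    congr 2 <;> omega
  have f1 : b * k = a * (K - k) := by
    have h := Nat.choose_succ_right_eq (K-1) (k-1)
    have h1 : k - 1 + 1 = k := by omega
    have h2 : K - 1 - (k-1) = K - k := by omega
    rw [h1, h2] at h; exact h
  have f2 : d * (m+1-k) = c * (n - K - (m-k)) := by
    have h := Nat.choose_succ_right_eq (n-K) (m-k)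
    have h1 : m - k + 1 = m+1-k := by omega
    rw [h1] at h; exact h
  rw [pascal]
  rcases Nat.eq_zero_or_pos a with ha | ha
  · have hlt : K - 1 < k - 1 := Nat.choose_eq_zero_iff.mp ha
    have hb : b = 0 := Nat.choose_eq_zero_iff.mpr (by omega)
    rw [ha, hb]; ring
  rcases Nat.eq_zero_or_pos c with hc | hc
  · have hmk1 : m + 1 - k ≠ 0 := by omega
    have hd' : d = 0 := by
      rcases Nat.mul_eq_zero.mp (show d * (m+1-k) = 0 by rw [f2, hc, zero_mul]) with h | h
      · exact h
      · exact absurd h hmk1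
    rw [hc, hd']; ring
  have hkK : k ≤ K := by
    rcases Nat.lt_or_ge K k with h | h
    · exfalso
      have h0 : (K-1).choose (k-1) = 0 := Nat.choose_eq_zero_iff.mpr (by omega)
      rw [← ha_def] at h0; omega
    · exact h
  have hmk : m - k ≤ n - K := by
    rcases Nat.lt_or_ge (n-K) (m-k) with h | h
    · exfalso
      have h0 : (n-K).choose (m-k) = 0 := Nat.choose_eq_zero_iff.mpr h
      rw [← hc_def] at h0; omega
    · exact h
  zify [hmn.le, hkm, hkK, hKn, hmk, show k ≤ m+1 by omega] at f1 f2 ⊢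
  linear_combination (-(c:ℤ))*f1 - (a:ℤ)*f2

lemma tele (t : ℕ → ℕ) : ∀ m {j}, j ≤ m →
    (∑ k ∈ Finset.Ioc j m, t k) + t (m+1)
      = (∑ k ∈ Finset.Ioc j m, t (k+1)) + t (j+1) := by
  intro m
  induction m with
  | zero => intro j hj; interval_cases j; simp
  | succ m ih =>
    intro j hj
    rcases Nat.eq_or_lt_of_le hj with h | h
    · subst h; simp
    · have hjm : j ≤ m := by omega
      rw [Finset.sum_Ioc_succ_top hjm, Finset.sum_Ioc_succ_top hjm]
      have := ih hjm
      omega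

lemma sum_id (n m K j : ℕ) (hmn : m < n) (hK1 : 1 ≤ K) (hKn : K ≤ n) (hjm : j < m) :
    (n-m) * (∑ k ∈ Finset.Ioc j m, K.choose k * (n-K).choose (m-k))
    = n * (∑ k ∈ Finset.Ioc j m, (K-1).choose k * (n-K).choose (m-k))
      + (m-j) * ((K-1).choose j * (n-K).choose (m-j)) := by
  set t : ℕ → ℕ := fun k => (m+1-k) * ((K-1).choose (k-1) * (n-K).choose (m+1-k)) with ht
  have hterm : ∀ k ∈ Finset.Ioc j m,
      (n-m) * (K.choose k * (n-K).choose (m-k)) + t (k+1)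
        = n * ((K-1).choose k * (n-K).choose (m-k)) + t k := by
    intro k hk
    rw [Finset.mem_Ioc] at hk
    have h := term_id n m K k (by omega) hk.2 hmn hK1 hKn
    simp only [ht]
    have e1 : m + 1 - (k+1) = m - k := by omega
    have e2 : k + 1 - 1 = k := by omega
    rw [e1, e2]
    rw [← mul_assoc, ← mul_assoc, ← mul_assoc, ← mul_assoc]
    omega
  have hsum := Finset.sum_congr rfl hterm
  rw [Finset.sum_add_distrib, Finset.sum_add_distrib, ← Finset.mul_sum, ← Finset.mul_sum]
    at hsum
  have htel := tele t m hjm.le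
  have htm : t (m+1) = 0 := by simp [ht]
  have htj : t (j+1) = (m-j) * ((K-1).choose j * (n-K).choose (m-j)) := by
    have e1 : m + 1 - (j+1) = m - j := by omega
    have e2 : j + 1 - 1 = j := by omega
    simp only [ht, e1, e2]
  omega

set_option maxHeartbeats 2000000 in
/-- tightness of the stability guarantee: fix `n > m ≥ 1` and
`δ ∈ (0,1/2)`. There exists a base algorithm `𝒜` (mapping a multiset data set and a test
point to a prediction in `[0,1]`) such that derandomized subbagging of `𝒜` with bags of
size `m` out of `n` is not `(ε,δ)`-stable for any
`ε < (1 - δ - 1/n)·p·P{H = ⌊p(1+⌊nδ⌋)⌋}`, where `p = m/n` and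
`H ∼ HyperGeometric(n-1, ⌊nδ⌋, m)`: there is a data set `D` and a test point `x` for
which more than a `δ` fraction of the leave-one-out perturbations exceed `ε`. -/
theorem subbagging_not_stable
    (n m : ℕ) (hm : 1 ≤ m) (hmn : m < n) (δ : ℝ) (hδ : δ ∈ Set.Ioo (0 : ℝ) (1 / 2)) :
    ∃ 𝒜 : Multiset (ℝ × ℝ) → ℝ → ℝ,
      (∀ ms x, 𝒜 ms x ∈ Set.Icc (0 : ℝ) 1) ∧
      ∃ (D : Fin n → ℝ × ℝ) (x : ℝ),
        ∀ ε : ℝ, 0 ≤ ε →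
          ε < (1 - δ - 1 / n) * ((m : ℝ) / n) *
            ((((Nat.floor ((n : ℝ) * δ)).choose
                  (Nat.floor (((m : ℝ) / n) * (1 + (Nat.floor ((n : ℝ) * δ) : ℝ)))) *
                ((n - 1) - Nat.floor ((n : ℝ) * δ)).choose
                  (m - Nat.floor (((m : ℝ) / n) * (1 + (Nat.floor ((n : ℝ) * δ) : ℝ)))) : ℕ) : ℝ)
              / ((n - 1).choose m)) →
          δ * n <
            ((Finset.univ.filter (fun i : Fin n =>
              ε < |(∑ A ∈ (Finset.univ : Finset (Fin n)).powersetCard m,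
                      𝒜 (A.val.map D) x) / (n.choose m)
                   - (∑ A ∈ ((Finset.univ : Finset (Fin n)).erase i).powersetCard m,
                      𝒜 (A.val.map D) x) / ((n - 1).choose m)|)).card : ℝ) := by
  classical
  obtain ⟨hδ0, hδ2⟩ := hδ
  have hn0 : 0 < n := by omega
  have hn2 : 2 ≤ n := by omega
  set F := Nat.floor ((n : ℝ) * δ) with hF
  have hFle : (F : ℝ) ≤ (n : ℝ) * δ := Nat.floor_le (by positivity)
  have h2F : 2 * F < n := by
    have h : (2 * F : ℝ) < (n : ℝ) := by
      have : (n : ℝ) * δ < (n : ℝ) * (1/2) := by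
        apply mul_lt_mul_of_pos_left hδ2
        exact_mod_cast hn0
      nlinarith
    exact_mod_cast h
  set K := F + 1 with hK
  have hK1 : 1 ≤ K := by omega
  have hKn : K < n := by omega
  set j := (m * K) / n with hj
  have hjm : j < m := by
    rw [hj, Nat.div_lt_iff_lt_mul hn0]
    exact mul_lt_mul_of_pos_left hKn (by omega)
  have hjstat : Nat.floor (((m : ℝ) / n) * (1 + (F : ℝ))) = j := by
    have h : ((m : ℝ) / n) * (1 + (F : ℝ)) = ((m * K : ℕ) : ℝ) / ((n : ℕ) : ℝ) := by
      push_cast [hK]; ring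
    rw [h, Nat.floor_div_natCast, Nat.floor_natCast]
  have hnK : (n - 1) - F = n - K := by omega
  set S : Finset (Fin n) := Finset.univ.filter (fun i => (i : ℕ) < K) with hS
  have hScard : S.card = K := by
    have h : S = Finset.Iio (⟨K, hKn⟩ : Fin n) := by
      ext i; simp [hS, Fin.lt_def]
    rw [h, Fin.card_Iio]
  have hScompl : (Finset.univ \ S).card = n - K := by
    rw [← Finset.compl_eq_univ_sdiff, Finset.card_compl, hScard, Fintype.card_fin]
  -- the algorithm, data set and test point
  refine ⟨fun ms _ => if j < (Multiset.filter (fun p : ℝ × ℝ => p.1 = 1) ms).card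
      then 1 else 0, ?_, fun i => (if (i : ℕ) < K then (1:ℝ) else 0, 0), 0, ?_⟩
  · intro ms x
    dsimp only
    split <;> simp
  intro ε hε hεB
  set D : Fin n → ℝ × ℝ := fun i => (if (i : ℕ) < K then (1:ℝ) else 0, 0) with hD
  have heval : ∀ A : Finset (Fin n),
      (if j < (Multiset.filter (fun p : ℝ × ℝ => p.1 = 1) (A.val.map D)).card
        then (1:ℝ) else 0)
      = if j < (A ∩ S).card then (1:ℝ) else 0 := by
    intro A
    have hcard : (Multiset.filter (fun p : ℝ × ℝ => p.1 = 1) (A.val.map D)).card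
        = (A ∩ S).card := by
      rw [Multiset.filter_map, Multiset.card_map]
      have hco : Multiset.filter ((fun p : ℝ × ℝ => p.1 = 1) ∘ D) A.val
          = Multiset.filter (fun i : Fin n => (i : ℕ) < K) A.val := by
        apply Multiset.filter_congr
        intro i _
        simp only [hD, Function.comp]
        split_ifs with h <;> simp [h]
      rw [hco]
      have : A ∩ S = A.filter (fun i : Fin n => (i : ℕ) < K) := by
        ext i; simp [hS, and_comm]
      rw [this, Finset.card_def, Finset.filter_val]
    rw [hcard]
  set N := ∑ k ∈ Finset.Ioc j m, K.choose k * (n - K).choose (m - k) with hN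
  set Ni := ∑ k ∈ Finset.Ioc j m, (K - 1).choose k * (n - K).choose (m - k) with hNi
  have hsumN : (∑ A ∈ (Finset.univ : Finset (Fin n)).powersetCard m,
      (if j < (A ∩ S).card then (1:ℝ) else 0)) = (N : ℝ) := by
    rw [Finset.sum_boole]
    norm_cast
    rw [tail_count Finset.univ S (Finset.subset_univ S) m j, hScard, hScompl]
  have hsumNi : ∀ i ∈ S, (∑ A ∈ ((Finset.univ : Finset (Fin n)).erase i).powersetCard m,
      (if j < (A ∩ S).card then (1:ℝ) else 0)) = (Ni : ℝ) := by
    intro i hiS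
    rw [Finset.sum_boole]
    norm_cast
    have hiff : ∀ A ∈ (Finset.univ.erase i).powersetCard m,
        (j < (A ∩ S).card ↔ j < (A ∩ S.erase i).card) := by
      intro A hA
      rw [Finset.mem_powersetCard] at hA
      have hiA : i ∉ A := fun h => (Finset.mem_erase.mp (hA.1 h)).1 rfl
      have : A ∩ S = A ∩ S.erase i := by
        ext x
        simp only [Finset.mem_inter, Finset.mem_erase]
        constructor
        · rintro ⟨hxA, hxS⟩
          exact ⟨hxA, fun hxi => hiA (hxi ▸ hxA), hxS⟩
        · rintro ⟨hxA, _, hxS⟩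
          exact ⟨hxA, hxS⟩
      rw [this]
    rw [Finset.filter_congr hiff,
      tail_count (Finset.univ.erase i) (S.erase i)
        (fun x hx => Finset.mem_erase.mpr
          ⟨(Finset.mem_erase.mp hx).1, Finset.mem_univ x⟩) m j]
    have hc1 : (S.erase i).card = K - 1 := by
      rw [Finset.card_erase_of_mem hiS, hScard]
    have hc2 : (Finset.univ.erase i \ S.erase i).card = n - K := by
      have heq : Finset.univ.erase i \ S.erase i = Finset.univ \ S := by
        ext x
        constructor
        · intro hx
          obtain ⟨hxe, hxSe⟩ := Finset.mem_sdiff.mp hx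
          have hxi := (Finset.mem_erase.mp hxe).1
          exact Finset.mem_sdiff.mpr ⟨Finset.mem_univ x,
            fun hxS => hxSe (Finset.mem_erase.mpr ⟨hxi, hxS⟩)⟩
        · intro hx
          obtain ⟨hxu, hxS⟩ := Finset.mem_sdiff.mp hx
          exact Finset.mem_sdiff.mpr ⟨Finset.mem_erase.mpr
            ⟨fun h => hxS (h ▸ hiS), Finset.mem_univ x⟩,
            fun hc => hxS (Finset.mem_of_mem_erase hc)⟩
      rw [heq, hScompl]
    rw [hc1, hc2]
  -- the combinatorial identity
  have hkey : (n - m) * N = n * Ni + (m - j) * ((K - 1).choose j * (n - K).choose (m - j)) :=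
    sum_id n m K j hmn hK1 hKn.le hjm
  set q := (K - 1).choose j * (n - K).choose (m - j) with hq
  have hchoose_id : n * (n - 1).choose m = n.choose m * (n - m) := by
    have h1 := Nat.add_one_mul_choose_eq (n - 1) m
    have h2 := Nat.choose_succ_right_eq n m
    have h3 : n - 1 + 1 = n := by omega
    rw [h3] at h1
    rw [h1]
    exact h2
  have hc1 : (0 : ℝ) < (n.choose m : ℕ) := by
    exact_mod_cast Nat.choose_pos hmn.le
  have hc2 : (0 : ℝ) < ((n - 1).choose m : ℕ) := by
    exact_mod_cast Nat.choose_pos (by omega : m ≤ n - 1)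
  have hnR : (0 : ℝ) < (n : ℝ) := by exact_mod_cast hn0
  -- the real-valued difference
  have hdiff : (N : ℝ) / (n.choose m) - (Ni : ℝ) / ((n - 1).choose m)
      = (((m - j) * q : ℕ) : ℝ) / ((n : ℝ) * ((n - 1).choose m)) := by
    have hkey' : ((n - m : ℕ) : ℝ) * N = (n : ℝ) * Ni + (((m - j) * q : ℕ) : ℝ) := by
      exact_mod_cast hkey
    have hnid : (n : ℝ) * (((n - 1).choose m : ℕ) : ℝ)
        = ((n.choose m : ℕ) : ℝ) * ((n - m : ℕ) : ℝ) := by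
      exact_mod_cast hchoose_id
    rw [div_sub_div _ _ hc1.ne' hc2.ne', div_eq_div_iff (by positivity) (by positivity)]
    linear_combination ((N : ℝ) * ((n - 1).choose m : ℕ)) * hnid
      + ((n.choose m : ℕ) : ℝ) * (((n - 1).choose m : ℕ) : ℝ) * hkey'
  -- lower bound for the difference
  have hjle : (j : ℝ) ≤ δ * m + (m : ℝ) / n := by
    have h1 : (j : ℝ) * n ≤ (m : ℝ) * K := by
      have := Nat.div_mul_le_self (m * K) n
      exact_mod_cast this
    have h2 : (K : ℝ) ≤ (n : ℝ) * δ + 1 := by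
      rw [hK]; push_cast; linarith
    rw [show δ * m + (m : ℝ) / n = (δ * m * n + m) / n by field_simp]
    rw [le_div_iff₀ hnR]
    nlinarith
  have hmj : ((m - j : ℕ) : ℝ) = (m : ℝ) - j := by
    have : j ≤ m := hjm.le
    push_cast [this]; ring
  have hBled : (1 - δ - 1 / n) * ((m : ℝ) / n) * ((q : ℕ) / ((n - 1).choose m))
      ≤ (((m - j) * q : ℕ) : ℝ) / ((n : ℝ) * ((n - 1).choose m)) := by
    have hqnn : (0 : ℝ) ≤ (q : ℕ) := Nat.cast_nonneg q
    have e1 : (((m - j) * q : ℕ) : ℝ) / ((n : ℝ) * ((n - 1).choose m))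
        = (((m : ℝ) - j) / n) * ((q : ℕ) / ((n - 1).choose m)) := by
      push_cast [hjm.le]
      field_simp
      try ring
    rw [e1]
    apply mul_le_mul_of_nonneg_right _ (by positivity)
    have h : (1 - δ - 1/n) * m ≤ (m : ℝ) - j := by
      have hexp : (1 - δ - 1/(n:ℝ)) * m = m - δ * m - (m:ℝ)/n := by ring
      rw [hexp]; linarith
    calc (1 - δ - 1/n) * ((m:ℝ)/n) = ((1 - δ - 1/n) * m)/n := by ring
    _ ≤ ((m:ℝ) - j)/n := by gcongr
  -- the bound in the statement equals our bound
  have hstat : (1 - δ - 1 / n) * ((m : ℝ) / n) *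
      ((((Nat.floor ((n : ℝ) * δ)).choose
            (Nat.floor (((m : ℝ) / n) * (1 + (Nat.floor ((n : ℝ) * δ) : ℝ)))) *
          ((n - 1) - Nat.floor ((n : ℝ) * δ)).choose
            (m - Nat.floor (((m : ℝ) / n) * (1 + (Nat.floor ((n : ℝ) * δ) : ℝ)))) : ℕ) : ℝ)
        / ((n - 1).choose m))
      = (1 - δ - 1 / n) * ((m : ℝ) / n) * ((q : ℕ) / ((n - 1).choose m)) := by
    rw [← hF, hjstat, hnK, hq]
    have : K - 1 = F := by omega
    rw [this]
  rw [hstat] at hεB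
  -- every i ∈ S is a witness
  have hwit : ∀ i ∈ S,
      ε < |(∑ A ∈ (Finset.univ : Finset (Fin n)).powersetCard m,
              (if j < (Multiset.filter (fun p : ℝ × ℝ => p.1 = 1) (A.val.map D)).card
                then (1:ℝ) else 0)) / (n.choose m)
           - (∑ A ∈ ((Finset.univ : Finset (Fin n)).erase i).powersetCard m,
              (if j < (Multiset.filter (fun p : ℝ × ℝ => p.1 = 1) (A.val.map D)).card
                then (1:ℝ) else 0)) / ((n - 1).choose m)| := by
    intro i hiS
    have e1 : (∑ A ∈ (Finset.univ : Finset (Fin n)).powersetCard m,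
        (if j < (Multiset.filter (fun p : ℝ × ℝ => p.1 = 1) (A.val.map D)).card
          then (1:ℝ) else 0)) = (N : ℝ) := by
      rw [← hsumN]
      exact Finset.sum_congr rfl fun A _ => heval A
    have e2 : (∑ A ∈ ((Finset.univ : Finset (Fin n)).erase i).powersetCard m,
        (if j < (Multiset.filter (fun p : ℝ × ℝ => p.1 = 1) (A.val.map D)).card
          then (1:ℝ) else 0)) = (Ni : ℝ) := by
      rw [← hsumNi i hiS]
      exact Finset.sum_congr rfl fun A _ => heval A
    rw [e1, e2, hdiff]
    have hlt : ε < (((m - j) * q : ℕ) : ℝ) / ((n : ℝ) * ((n - 1).choose m)) :=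
      lt_of_lt_of_le hεB hBled
    rw [abs_of_pos (lt_of_le_of_lt hε hlt)]
    exact hlt
  -- conclude
  have hsub : S ⊆ Finset.univ.filter (fun i : Fin n =>
      ε < |(∑ A ∈ (Finset.univ : Finset (Fin n)).powersetCard m,
              (if j < (Multiset.filter (fun p : ℝ × ℝ => p.1 = 1) (A.val.map D)).card
                then (1:ℝ) else 0)) / (n.choose m)
           - (∑ A ∈ ((Finset.univ : Finset (Fin n)).erase i).powersetCard m,
              (if j < (Multiset.filter (fun p : ℝ × ℝ => p.1 = 1) (A.val.map D)).card
                then (1:ℝ) else 0)) / ((n - 1).choose m)|) := by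
    intro i hiS
    exact Finset.mem_filter.mpr ⟨Finset.mem_univ i, hwit i hiS⟩
  have hcard := Finset.card_le_card hsub
  rw [hScard] at hcard
  have hδn : δ * n < (K : ℝ) := by
    have := Nat.lt_floor_add_one ((n : ℝ) * δ)
    rw [hK]; push_cast; linarith [this]
  calc δ * n < (K : ℝ) := hδn
  _ ≤ _ := by simp only [Nat.cast_ite, Nat.cast_one, Nat.cast_zero]; exact_mod_cast hcard
end

section
/- Under the same conditions as the main stability bound (Y_r ∈ [0,1], inclusion probability p ∈ (0,1), negated covariance q ≥ 0), the average leave-one-out perturbation satisfies (1/n)·Σ_{i=1}^n |ŷ - ŷ^{∖i}| ≤ √((1/(4n))·(p/(1-p) + q/(1-p)²)). -/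
/-- Weighted Cauchy–Schwarz. -/
lemma weighted_CS {S : Type*} [Fintype S] (w f g : S → ℝ) (hw : ∀ s, 0 ≤ w s) :
    (∑ s, w s * (f s * g s)) ^ 2 ≤ (∑ s, w s * f s ^ 2) * (∑ s, w s * g s ^ 2) := by
  have h := Finset.sum_mul_sq_le_sq_mul_sq Finset.univ
    (fun s => Real.sqrt (w s) * f s) (fun s => Real.sqrt (w s) * g s)
  have hsq : ∀ s : S, Real.sqrt (w s) ^ 2 = w s := fun s => Real.sq_sqrt (hw s)
  calc (∑ s, w s * (f s * g s)) ^ 2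
      = (∑ s : S, (Real.sqrt (w s) * f s) * (Real.sqrt (w s) * g s)) ^ 2 := by
        congr 1; apply Finset.sum_congr rfl; intro s _
        rw [show (Real.sqrt (w s) * f s) * (Real.sqrt (w s) * g s)
            = Real.sqrt (w s) ^ 2 * (f s * g s) by ring, hsq s]
    _ ≤ (∑ s : S, (Real.sqrt (w s) * f s) ^ 2) * ∑ s : S, (Real.sqrt (w s) * g s) ^ 2 := h
    _ = (∑ s, w s * f s ^ 2) * (∑ s, w s * g s ^ 2) := by
        congr 1 <;> exact Finset.sum_congr rfl fun s _ => by rw [mul_pow, hsq s]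

/-- Covariance expansion. -/
lemma expand_cov {S : Type*} [Fintype S] (w : S → ℝ) (hw1 : ∑ s, w s = 1)
    (f g : S → ℝ) (a b : ℝ)
    (hf : ∑ s, w s * f s = a) (hg : ∑ s, w s * g s = b) :
    ∑ s, w s * ((f s - a) * (g s - b)) = (∑ s, w s * (f s * g s)) - a * b := by
  have e : ∀ s : S, w s * ((f s - a) * (g s - b))
      = w s * (f s * g s) - b * (w s * f s) - a * (w s * g s) + (a * b) * w s :=
    fun s => by ring
  rw [Finset.sum_congr rfl fun s _ => e s, Finset.sum_add_distrib,
    Finset.sum_sub_distrib, Finset.sum_sub_distrib, ← Finset.mul_sum, ← Finset.mul_sum,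
    ← Finset.mul_sum, hf, hg, hw1]
  ring

/-- Variance of a linear combination expands to a double sum of covariances. -/
lemma var_sum_swap {S : Type*} [Fintype S] {n : ℕ} (w : S → ℝ) (c : Fin n → ℝ)
    (u : Fin n → S → ℝ) :
    ∑ s, w s * (∑ i, c i * u i s) ^ 2
      = ∑ i, ∑ j, (c i * c j) * ∑ s, w s * (u i s * u j s) := by
  have e : ∀ s : S, w s * (∑ i, c i * u i s) ^ 2
      = ∑ i, ∑ j, (c i * c j) * (w s * (u i s * u j s)) := by
    intro s
    rw [sq, Finset.sum_mul_sum, Finset.mul_sum]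
    refine Finset.sum_congr rfl fun i _ => ?_
    rw [Finset.mul_sum]
    exact Finset.sum_congr rfl fun j _ => by ring
  rw [Finset.sum_congr rfl fun s _ => e s, Finset.sum_comm]
  refine Finset.sum_congr rfl fun i _ => ?_
  rw [Finset.sum_comm]
  exact Finset.sum_congr rfl fun j _ => (Finset.mul_sum _ _ _).symm

/-- Swap: ∑ᵢ cᵢ ⟨h, uᵢ⟩ = ⟨h, ∑ᵢ cᵢ uᵢ⟩. -/
lemma cov_sum_swap {S : Type*} [Fintype S] {n : ℕ} (w : S → ℝ) (c : Fin n → ℝ)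
    (h : S → ℝ) (u : Fin n → S → ℝ) :
    ∑ i, c i * (∑ s, w s * (h s * u i s))
      = ∑ s, w s * (h s * (∑ i, c i * u i s)) := by
  have e : ∀ s : S, w s * (h s * (∑ i, c i * u i s))
      = ∑ i, c i * (w s * (h s * u i s)) := by
    intro s
    rw [Finset.mul_sum, Finset.mul_sum]
    exact Finset.sum_congr rfl fun i _ => by ring
  rw [Finset.sum_congr rfl fun s _ => e s, Finset.sum_comm]
  exact Finset.sum_congr rfl fun i _ => Finset.mul_sum _ _ _

set_option maxHeartbeats 1000000 in
/-- stability in expectation: under the conditions of the main stability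
bound (`Y_r ∈ [0,1]`, inclusion probability `p ∈ (0,1)`, negated covariance `q ≥ 0`), the
average leave-one-out perturbation satisfies
`(1/n)·Σ_i |ŷ - ŷ^{∖i}| ≤ √((1/(4n))·(p/(1-p) + q/(1-p)²))`. -/
theorem bagging_stability_in_expectation
    {S : Type*} [Fintype S] (w : S → ℝ) (hw0 : ∀ s, 0 ≤ w s) (hw1 : ∑ s, w s = 1)
    (n : ℕ) (hn : 0 < n) (bag : S → Finset (Fin n))
    (Y : S → ℝ) (hY : ∀ s, Y s ∈ Set.Icc (0 : ℝ) 1)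
    (p q : ℝ) (hp01 : p ∈ Set.Ioo (0 : ℝ) 1) (hq : 0 ≤ q)
    (hp : ∀ i : Fin n, ∑ s, w s * (if i ∈ bag s then (1 : ℝ) else 0) = p)
    (hcov : ∀ i j : Fin n, i ≠ j →
      (∑ s, w s * ((if i ∈ bag s then (1 : ℝ) else 0) * (if j ∈ bag s then (1 : ℝ) else 0)))
        - p * p = -q)
    (yhat : ℝ) (hyhat : yhat = ∑ s, w s * Y s)
    (loo : Fin n → ℝ)
    (hloo : ∀ i, loo i = (∑ s, w s * (if i ∉ bag s then Y s else 0)) / (1 - p)) :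
    (1 / n) * ∑ i : Fin n, |yhat - loo i|
      ≤ Real.sqrt (1 / (4 * n) * (p / (1 - p) + q / (1 - p) ^ 2)) := by
  obtain ⟨hp0, hp1⟩ := hp01
  have h1p : (0:ℝ) < 1 - p := by linarith
  have hn' : (0:ℝ) < n := by exact_mod_cast hn
  -- indicator and centered indicator
  set Z : Fin n → S → ℝ := fun i s => if i ∈ bag s then 1 else 0 with hZdef
  set u : Fin n → S → ℝ := fun i s => Z i s - p with hudef
  have hZp : ∀ i, ∑ s, w s * Z i s = p := fun i => hp i
  -- the covariances c i
  set c : Fin n → ℝ := fun i => ∑ s, w s * ((Y s - yhat) * u i s) with hcdef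
  have hcval : ∀ i, c i = (∑ s, w s * (Y s * Z i s)) - yhat * p := by
    intro i
    exact expand_cov w hw1 Y (Z i) yhat p hyhat.symm (hZp i)
  -- Step A: yhat - loo i = c i / (1 - p)
  have hA : ∀ i, yhat - loo i = c i / (1 - p) := by
    intro i
    have hsplit : ∑ s, w s * (if i ∉ bag s then Y s else 0)
        = yhat - ∑ s, w s * (Y s * Z i s) := by
      rw [hyhat, ← Finset.sum_sub_distrib]
      refine Finset.sum_congr rfl fun s _ => ?_
      by_cases h : i ∈ bag s <;> simp [hZdef, h]
    rw [hloo i, hsplit, hcval i]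
    field_simp
    ring
  -- variance of Y bound
  have hVY : ∑ s, w s * ((Y s - yhat) * (Y s - yhat)) ≤ 1/4 := by
    have hexp := expand_cov w hw1 Y Y yhat yhat hyhat.symm hyhat.symm
    have hY2 : ∑ s, w s * (Y s * Y s) ≤ ∑ s, w s * Y s :=
      Finset.sum_le_sum fun s _ => by
        nlinarith [mul_nonneg (hw0 s) (mul_nonneg (hY s).1 (sub_nonneg.2 (hY s).2))]
    rw [hexp]
    nlinarith [sq_nonneg (2 * yhat - 1), hyhat]
  -- covariance of indicators
  have hCii : ∀ i, ∑ s, w s * (u i s * u i s) = p - p * p := by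
    intro i
    have := expand_cov w hw1 (Z i) (Z i) p p (hZp i) (hZp i)
    have hZZ : ∑ s, w s * (Z i s * Z i s) = p := by
      rw [← hZp i]
      refine Finset.sum_congr rfl fun s _ => ?_
      by_cases h : i ∈ bag s <;> simp [hZdef, h]
    rw [hudef]; rw [this, hZZ]
  have hCij : ∀ i j, i ≠ j → ∑ s, w s * (u i s * u j s) = -q := by
    intro i j hij
    have := expand_cov w hw1 (Z i) (Z j) p p (hZp i) (hZp j)
    rw [hudef]; rw [this]
    exact hcov i j hij
  -- T and its bound
  set T : ℝ := ∑ i, c i ^ 2 with hTdef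
  have hTnn : 0 ≤ T := Finset.sum_nonneg fun i _ => sq_nonneg _
  set Sc : ℝ := ∑ i, c i with hScdef
  set g : S → ℝ := fun s => ∑ i, c i * u i s with hgdef
  have hVG : ∑ s, w s * g s ^ 2 = (p - p * p + q) * T - q * Sc ^ 2 := by
    rw [hgdef]
    rw [var_sum_swap w c u]
    have inner : ∀ i, ∑ j, (c i * c j) * ∑ s, w s * (u i s * u j s)
        = (p - p * p + q) * c i ^ 2 - q * (c i * Sc) := by
      intro i
      rw [← Finset.add_sum_erase _ _ (Finset.mem_univ i), hCii i]
      have h2 : ∑ j ∈ Finset.univ.erase i, (c i * c j) * ∑ s, w s * (u i s * u j s)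
          = ∑ j ∈ Finset.univ.erase i, (c i * c j) * (-q) :=
        Finset.sum_congr rfl fun j hj =>
          by rw [hCij i j (Ne.symm (Finset.ne_of_mem_erase hj))]
      rw [h2]
      have h3 : ∑ j ∈ Finset.univ.erase i, c j = Sc - c i :=
        Finset.sum_erase_eq_sub (Finset.mem_univ i)
      have h4 : ∑ j ∈ Finset.univ.erase i, (c i * c j) * (-q)
          = (c i * (-q)) * ∑ j ∈ Finset.univ.erase i, c j := by
        rw [Finset.mul_sum]
        exact Finset.sum_congr rfl fun j _ => by ring
      rw [h4, h3]; ring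
    rw [Finset.sum_congr rfl fun i _ => inner i, Finset.sum_sub_distrib,
      ← Finset.mul_sum, ← Finset.mul_sum, ← Finset.sum_mul]
    rw [← hTdef, ← hScdef]
    ring
  have hVGnn : 0 ≤ ∑ s, w s * g s ^ 2 :=
    Finset.sum_nonneg fun s _ => mul_nonneg (hw0 s) (sq_nonneg _)
  have hTg : T = ∑ s, w s * ((Y s - yhat) * g s) := by
    rw [hTdef, hgdef, ← cov_sum_swap w c (fun s => Y s - yhat) u]
    exact Finset.sum_congr rfl fun i _ => by rw [sq, hcdef]
  -- Cauchy–Schwarz : T² ≤ VY · VG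
  have hCS : T ^ 2 ≤ (∑ s, w s * (Y s - yhat) ^ 2) * (∑ s, w s * g s ^ 2) := by
    rw [hTg]
    exact weighted_CS w (fun s => Y s - yhat) g hw0
  have hVY' : ∑ s, w s * (Y s - yhat) ^ 2 ≤ 1/4 := by
    calc ∑ s, w s * (Y s - yhat) ^ 2 = ∑ s, w s * ((Y s - yhat) * (Y s - yhat)) :=
          Finset.sum_congr rfl fun s _ => by ring
      _ ≤ 1/4 := hVY
  have hpq : (0:ℝ) ≤ p - p * p + q := by nlinarith
  have hT2 : T ^ 2 ≤ 1/4 * ((p - p * p + q) * T) := by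
    calc T ^ 2 ≤ (∑ s, w s * (Y s - yhat) ^ 2) * (∑ s, w s * g s ^ 2) := hCS
      _ ≤ 1/4 * (∑ s, w s * g s ^ 2) := mul_le_mul_of_nonneg_right hVY' hVGnn
      _ ≤ 1/4 * ((p - p * p + q) * T) := by
          have : ∑ s, w s * g s ^ 2 ≤ (p - p * p + q) * T := by
            rw [hVG]; nlinarith [sq_nonneg Sc]
          linarith
  have hTle : T ≤ 1/4 * (p - p * p + q) := by
    rcases eq_or_lt_of_le hTnn with h | h
    · nlinarith
    · nlinarith
  -- abs sums
  have hL : ∑ i : Fin n, |yhat - loo i| = (∑ i, |c i|) / (1 - p) := by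
    rw [Finset.sum_div]
    exact Finset.sum_congr rfl fun i _ => by
      rw [hA i, abs_div, abs_of_pos h1p]
  have hCS2 : (∑ i, |c i|) ^ 2 ≤ (n : ℝ) * T := by
    have h := Finset.sum_mul_sq_le_sq_mul_sq Finset.univ
      (fun i : Fin n => |c i|) (fun _ => (1:ℝ))
    simp only [mul_one, one_pow, Finset.sum_const, Finset.card_univ, Fintype.card_fin,
      nsmul_eq_mul, sq_abs] at h
    calc (∑ i, |c i|) ^ 2 ≤ (∑ i, c i ^ 2) * ((n : ℝ) * 1) := by simpa using h
      _ = (n : ℝ) * T := by rw [hTdef]; ring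
  -- final assembly
  have hy_eq : 1 / (4 * (n:ℝ)) * (p / (1 - p) + q / (1 - p) ^ 2)
      = (p - p * p + q) / (4 * n * (1 - p) ^ 2) := by
    have hne : (1:ℝ) - p ≠ 0 := h1p.ne'
    have hnne : (n:ℝ) ≠ 0 := hn'.ne'
    field_simp
  have hden1 : (0:ℝ) < (n:ℝ) ^ 2 * (1 - p) ^ 2 := mul_pos (pow_pos hn' 2) (pow_pos h1p 2)
  have hden2 : (0:ℝ) < 4 * (n:ℝ) * (1 - p) ^ 2 :=
    mul_pos (by positivity) (pow_pos h1p 2)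
  rw [hy_eq]
  rw [Real.le_sqrt (by positivity) (div_nonneg hpq hden2.le)]
  have hxeq : ((1 / (n:ℝ)) * ∑ i : Fin n, |yhat - loo i|) ^ 2
      = (∑ i, |c i|) ^ 2 / ((n:ℝ) ^ 2 * (1 - p) ^ 2) := by
    rw [hL, mul_pow, div_pow, div_pow, one_pow, div_mul_div_comm, one_mul]
  rw [hxeq, div_le_div_iff₀ hden1 hden2]
  have hA2 : (∑ i, |c i|) ^ 2 ≤ (n:ℝ) * (1/4 * (p - p * p + q)) := by
    calc (∑ i, |c i|) ^ 2 ≤ (n : ℝ) * T := hCS2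
      _ ≤ (n:ℝ) * (1/4 * (p - p * p + q)) :=
          mul_le_mul_of_nonneg_left hTle hn'.le
  have h5 := mul_le_mul_of_nonneg_right hA2
    (mul_pos (by norm_num : (0:ℝ) < 4) (pow_pos h1p 2)).le
  have h6 := mul_le_mul_of_nonneg_left h5 hn'.le
  nlinarith [h6]
end

section
/- Under the same conditions, the root-mean-square leave-one-out perturbation satisfies √((1/n)·Σ_{i=1}^n (ŷ - ŷ^{∖i})²) ≤ √((1/(4n))·(p/(1-p) + q/(1-p)²)). -/
/-- RMS stability, the `k = 2` case of the `ℓ_k` theorem: under the same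
conditions, `√((1/n)·Σ_i (ŷ - ŷ^{∖i})²) ≤ √((1/(4n))·(p/(1-p) + q/(1-p)²))`. -/
theorem bagging_stability_rms
    {S : Type*} [Fintype S] (w : S → ℝ) (hw0 : ∀ s, 0 ≤ w s) (hw1 : ∑ s, w s = 1)
    (n : ℕ) (hn : 0 < n) (bag : S → Finset (Fin n))
    (Y : S → ℝ) (hY : ∀ s, Y s ∈ Set.Icc (0 : ℝ) 1)
    (p q : ℝ) (hp01 : p ∈ Set.Ioo (0 : ℝ) 1) (hq : 0 ≤ q)
    (hp : ∀ i : Fin n, ∑ s, w s * (if i ∈ bag s then (1 : ℝ) else 0) = p)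
    (hcov : ∀ i j : Fin n, i ≠ j →
      (∑ s, w s * ((if i ∈ bag s then (1 : ℝ) else 0) * (if j ∈ bag s then (1 : ℝ) else 0)))
        - p * p = -q)
    (yhat : ℝ) (hyhat : yhat = ∑ s, w s * Y s)
    (loo : Fin n → ℝ)
    (hloo : ∀ i, loo i = (∑ s, w s * (if i ∉ bag s then Y s else 0)) / (1 - p)) :
    Real.sqrt ((1 / n) * ∑ i : Fin n, (yhat - loo i) ^ 2)
      ≤ Real.sqrt (1 / (4 * n) * (p / (1 - p) + q / (1 - p) ^ 2)) := by
  obtain ⟨hp0, hp1⟩ := hp01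
  have h1p : (0:ℝ) < 1 - p := by linarith
  have hnR : (0:ℝ) < n := by exact_mod_cast hn
  set Z : Fin n → S → ℝ := fun i s => (if i ∈ bag s then (1:ℝ) else 0) - p with hZ
  have hEZ : ∀ i, ∑ s, w s * Z i s = 0 := by
    intro i
    simp only [hZ, mul_sub, Finset.sum_sub_distrib]
    rw [hp i, ← Finset.sum_mul, hw1]; ring
  have hEZZ : ∀ i j, ∑ s, w s * (Z i s * Z j s) =
      if i = j then p * (1 - p) else -q := by
    intro i j
    have key : ∀ s, w s * (Z i s * Z j s) =
        w s * ((if i ∈ bag s then (1:ℝ) else 0) * (if j ∈ bag s then (1:ℝ) else 0))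
        - p * (w s * (if i ∈ bag s then (1:ℝ) else 0))
        - p * (w s * (if j ∈ bag s then (1:ℝ) else 0)) + p * p * w s := by
      intro s; simp only [hZ]; ring
    rw [Finset.sum_congr rfl fun s _ => key s]
    simp only [Finset.sum_add_distrib, Finset.sum_sub_distrib, ← Finset.mul_sum, hp, hw1]
    by_cases h : i = j
    · subst h
      have e : ∀ s, w s * ((if i ∈ bag s then (1:ℝ) else 0) * (if i ∈ bag s then (1:ℝ) else 0))
          = w s * (if i ∈ bag s then (1:ℝ) else 0) := by
        intro s; by_cases hs : i ∈ bag s <;> simp [hs]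
      rw [Finset.sum_congr rfl fun s _ => e s, hp]
      simp; ring
    · have := hcov i j h
      rw [if_neg h]
      linarith
  set c : Fin n → ℝ := fun i => ∑ s, w s * (Y s * Z i s) with hc
  set C : ℝ := ∑ i, (c i)^2 with hCdef
  have hC0 : 0 ≤ C := Finset.sum_nonneg fun i _ => sq_nonneg _
  have hdiff : ∀ i, yhat - loo i = c i / (1 - p) := by
    intro i
    rw [hloo i, hyhat, eq_div_iff (ne_of_gt h1p), sub_mul,
      div_mul_cancel₀ _ (ne_of_gt h1p)]
    have e : ∀ s, w s * (if i ∉ bag s then Y s else 0)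
        = w s * Y s - w s * (Y s * (if i ∈ bag s then (1:ℝ) else 0)) := by
      intro s; by_cases hs : i ∈ bag s <;> simp [hs]
    rw [Finset.sum_congr rfl fun s _ => e s]
    simp only [hc, hZ, Finset.sum_sub_distrib, mul_sub]
    have e2 : ∑ s, w s * (Y s * p) = p * ∑ s, w s * Y s := by
      rw [Finset.mul_sum]; exact Finset.sum_congr rfl fun s _ => by ring
    rw [e2]; ring
  set T : S → ℝ := fun s => ∑ i, c i * Z i s with hT
  have hCeq : C = ∑ s, w s * (Y s * T s) := by
    simp only [hT, Finset.mul_sum]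
    rw [Finset.sum_comm]
    refine Finset.sum_congr rfl fun i _ => ?_
    have : ∑ s, w s * (Y s * (c i * Z i s)) = c i * ∑ s, w s * (Y s * Z i s) := by
      rw [Finset.mul_sum]; exact Finset.sum_congr rfl fun s _ => by ring
    rw [this, show (∑ s, w s * (Y s * Z i s)) = c i from rfl]; ring
  have hET : ∑ s, w s * T s = 0 := by
    simp only [hT, Finset.mul_sum]
    rw [Finset.sum_comm]
    rw [Finset.sum_congr rfl (fun i _ => ?_), Finset.sum_const_zero]
    have : ∑ s, w s * (c i * Z i s) = c i * ∑ s, w s * Z i s := by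
      rw [Finset.mul_sum]; exact Finset.sum_congr rfl fun s _ => by ring
    rw [this, hEZ]; ring
  have hCeq2 : C = ∑ s, w s * ((Y s - 1/2) * T s) := by
    have e : ∑ s, w s * ((Y s - 1/2) * T s)
        = (∑ s, w s * (Y s * T s)) - (1/2) * ∑ s, w s * T s := by
      rw [Finset.mul_sum, ← Finset.sum_sub_distrib]
      exact Finset.sum_congr rfl fun s _ => by ring
    rw [e, hET, ← hCeq]; ring
  have hT2 : ∑ s, w s * (T s)^2 ≤ (p * (1 - p) + q) * C := by
    have expand : ∑ s, w s * (T s)^2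
        = ∑ i, ∑ j, (c i * c j) * (∑ s, w s * (Z i s * Z j s)) := by
      have e1 : ∀ s, w s * (T s)^2
          = ∑ i, ∑ j, (c i * c j) * (w s * (Z i s * Z j s)) := by
        intro s
        rw [sq, show T s = ∑ i, c i * Z i s from rfl, Finset.sum_mul_sum, Finset.mul_sum]
        refine Finset.sum_congr rfl fun i _ => ?_
        rw [Finset.mul_sum]
        exact Finset.sum_congr rfl fun j _ => by ring
      rw [Finset.sum_congr rfl fun s _ => e1 s, Finset.sum_comm]
      refine Finset.sum_congr rfl fun i _ => ?_
      rw [Finset.sum_comm]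
      exact Finset.sum_congr rfl fun j _ => (Finset.mul_sum _ _ _).symm
    rw [expand]
    have e2 : ∑ i, ∑ j, (c i * c j) * (∑ s, w s * (Z i s * Z j s))
        = (p * (1 - p) + q) * C - q * (∑ i, c i)^2 := by
      simp only [hEZZ]
      have e3 : ∀ i : Fin n, ∑ j, (c i * c j) * (if i = j then p * (1 - p) else -q)
          = (c i)^2 * (p * (1 - p) + q) - q * (c i * ∑ j, c j) := by
        intro i
        have e4 : ∀ j : Fin n, (c i * c j) * (if i = j then p * (1 - p) else -q)
            = (if i = j then (c i)^2 * (p * (1 - p) + q) else 0) - q * (c i * c j) := by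
          intro j; by_cases h : i = j
          · subst h; simp; ring
          · simp [h]; ring
        have e5 : q * (c i * ∑ j, c j) = ∑ j, q * (c i * c j) := by
          rw [Finset.mul_sum, Finset.mul_sum]
        rw [Finset.sum_congr rfl fun j _ => e4 j, Finset.sum_sub_distrib,
          Finset.sum_ite_eq Finset.univ i (fun _ => (c i)^2 * (p * (1 - p) + q)),
          if_pos (Finset.mem_univ i), e5]
      rw [Finset.sum_congr rfl fun i _ => e3 i, Finset.sum_sub_distrib,
        ← Finset.sum_mul, ← hCdef, ← Finset.mul_sum, ← Finset.sum_mul]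
      ring
    rw [e2]
    nlinarith [sq_nonneg (∑ i, c i)]
  -- Cauchy–Schwarz step
  have hCS : C^2 ≤ (1/4) * ∑ s, w s * (T s)^2 := by
    have cs := Finset.sum_mul_sq_le_sq_mul_sq Finset.univ
      (fun s => Real.sqrt (w s) * (Y s - 1/2)) (fun s => Real.sqrt (w s) * T s)
    have e1 : ∀ s, (Real.sqrt (w s) * (Y s - 1/2)) * (Real.sqrt (w s) * T s)
        = w s * ((Y s - 1/2) * T s) := by
      intro s
      have h := Real.mul_self_sqrt (hw0 s)
      linear_combination ((Y s - 1/2) * T s) * h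
    have e2 : ∀ s, (Real.sqrt (w s) * (Y s - 1/2))^2 = w s * (Y s - 1/2)^2 := by
      intro s; rw [mul_pow, Real.sq_sqrt (hw0 s)]
    have e3 : ∀ s, (Real.sqrt (w s) * T s)^2 = w s * (T s)^2 := by
      intro s; rw [mul_pow, Real.sq_sqrt (hw0 s)]
    rw [Finset.sum_congr rfl fun s _ => e1 s, Finset.sum_congr rfl fun s _ => e2 s,
      Finset.sum_congr rfl fun s _ => e3 s, ← hCeq2] at cs
    have hb : ∑ s, w s * (Y s - 1/2)^2 ≤ 1/4 := by
      calc ∑ s, w s * (Y s - 1/2)^2 ≤ ∑ s, w s * (1/4) := by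
            refine Finset.sum_le_sum fun s _ => ?_
            have := hY s
            have h1 : (Y s - 1/2)^2 ≤ 1/4 := by
              rcases this with ⟨h2, h3⟩; nlinarith
            exact mul_le_mul_of_nonneg_left h1 (hw0 s)
        _ = 1/4 := by rw [← Finset.sum_mul, hw1]; ring
    have hTnn : 0 ≤ ∑ s, w s * (T s)^2 :=
      Finset.sum_nonneg fun s _ => mul_nonneg (hw0 s) (sq_nonneg _)
    nlinarith
  have hCbound : C ≤ (1/4) * (p * (1 - p) + q) := by
    rcases eq_or_lt_of_le hC0 with h | h
    · nlinarith
    · nlinarith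
  -- finish
  apply Real.sqrt_le_sqrt
  have hsum : ∑ i : Fin n, (yhat - loo i)^2 = C / (1 - p)^2 := by
    rw [hCdef, Finset.sum_div]
    exact Finset.sum_congr rfl fun i _ => by rw [hdiff i, div_pow]
  rw [hsum]
  rw [show (1:ℝ)/n * (C/(1-p)^2) = C / (n * (1-p)^2) by
    field_simp
  , show (1:ℝ)/(4*n) * (p/(1-p) + q/(1-p)^2) = ((1/4) * (p * (1-p) + q)) / (n * (1-p)^2) by
    field_simp]
  exact div_le_div_of_nonneg_right hCbound (by positivity) |>.trans_eq rfl
end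

section
/- Suppose the derandomized bagged algorithm is (ε, δ)-stable (leave-one-out perturbations exceed ε for at most a δ-fraction of indices), and the finite-B bagged predictions f̂_B(x), f̂_B^{∖i}(x) are averages of B iid [0,1]-valued draws with means f̂_∞(x), f̂_∞^{∖i}(x) respectively. Then for any δ' > 0, (1/n)·Σ_{i=1}^n P{|f̂_B(x) - f̂_B^{∖i}(x)| > ε + √((2/B)·log(4/δ'))} ≤ δ + δ'. -/
open MeasureTheory ProbabilityTheory

lemma hoeff_h_pos {p : ℝ} (hp0 : 0 ≤ p) (hp1 : p ≤ 1) (s : ℝ) :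
    0 < 1 - p + p * Real.exp s := by
  rcases eq_or_lt_of_le hp0 with h | h
  · simp [← h]
  · have := Real.exp_pos s
    nlinarith

lemma hoeff_core {p : ℝ} (hp0 : 0 ≤ p) (hp1 : p ≤ 1) (s : ℝ) :
    1 - p + p * Real.exp s ≤ Real.exp (s * p + s ^ 2 / 8) := by
  set h : ℝ → ℝ := fun s => 1 - p + p * Real.exp s with hh
  have hhpos : ∀ s, 0 < h s := fun s => hoeff_h_pos hp0 hp1 s
  have hd : ∀ s, HasDerivAt h (p * Real.exp s) s := fun s =>
    ((Real.hasDerivAt_exp s).const_mul p).const_add (1 - p)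
  set G : ℝ → ℝ := fun s => p + s / 4 - p * Real.exp s / h s with hG
  set F : ℝ → ℝ := fun s => s * p + s ^ 2 / 8 - Real.log (h s) with hF
  have hdF : ∀ s, HasDerivAt F (G s) s := by
    intro s
    have h1 : HasDerivAt (fun s : ℝ => s * p + s ^ 2 / 8)
        (p + s / 4) s := by
      have := ((hasDerivAt_id s).mul_const p).add ((hasDerivAt_pow 2 s).div_const 8)
      exact this.congr_deriv (by push_cast; ring)
    have h2 : HasDerivAt (fun s => Real.log (h s)) (p * Real.exp s / h s) s :=
      (hd s).log (hhpos s).ne'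
    exact h1.sub h2
  have hdG : ∀ s, HasDerivAt G
      (1 / 4 - (p * Real.exp s * h s - p * Real.exp s * (p * Real.exp s)) / h s ^ 2) s := by
    intro s
    have h1 : HasDerivAt (fun s : ℝ => p + s / 4) (1 / 4) s := by
      simpa using (hasDerivAt_id s).div_const 4
    have h2 : HasDerivAt (fun s => p * Real.exp s / h s)
        ((p * Real.exp s * h s - p * Real.exp s * (p * Real.exp s)) / h s ^ 2) s :=
      ((Real.hasDerivAt_exp s).const_mul p).div (hd s) (hhpos s).ne'
    exact h1.sub h2
  have hGnonneg : ∀ s, 0 ≤ (1 / 4 : ℝ) -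
      (p * Real.exp s * h s - p * Real.exp s * (p * Real.exp s)) / h s ^ 2 := by
    intro s
    have hp2 := (hhpos s).ne'
    rw [sub_nonneg, div_le_iff₀ (by positivity)]
    have hu : 0 ≤ p * Real.exp s := by positivity
    have hv : (0:ℝ) ≤ 1 - p := by linarith
    have : h s = (1 - p) + p * Real.exp s := rfl
    nlinarith [sq_nonneg ((1 - p) - p * Real.exp s)]
  have hGmono : Monotone G := monotone_of_hasDerivAt_nonneg hdG hGnonneg
  have hG0 : G 0 = 0 := by
    simp [hG, hh]
  have hF0 : F 0 = 0 := by
    have : h 0 = 1 := by simp [hh]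
    simp [hF, this]
  have key : ∀ s, 0 ≤ F s := by
    intro s
    rcases le_total 0 s with hs | hs
    · have hmono : MonotoneOn F (Set.Ici 0) := by
        refine monotoneOn_of_hasDerivWithinAt_nonneg (convex_Ici 0)
          (fun x _ => (hdF x).continuousAt.continuousWithinAt)
          (fun x hx => (hdF x).hasDerivWithinAt) (fun x hx => ?_)
        rw [interior_Ici] at hx
        have := hGmono (le_of_lt hx)
        rw [hG0] at this
        exact this
      have := hmono (Set.self_mem_Ici) (Set.mem_Ici.2 hs) hs
      rwa [hF0] at this
    · have hanti : AntitoneOn F (Set.Iic 0) := by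
        refine antitoneOn_of_hasDerivWithinAt_nonpos (convex_Iic 0)
          (fun x _ => (hdF x).continuousAt.continuousWithinAt)
          (fun x hx => (hdF x).hasDerivWithinAt) (fun x hx => ?_)
        rw [interior_Iic] at hx
        have := hGmono (le_of_lt hx)
        rw [hG0] at this
        exact this
      have := hanti (Set.mem_Iic.2 hs) (Set.self_mem_Iic) hs
      rwa [hF0] at this
  have := key s
  have hlog : Real.log (h s) ≤ s * p + s ^ 2 / 8 := by
    simp only [hF] at this
    linarith
  calc h s ≤ Real.exp (Real.log (h s)) := by rw [Real.exp_log (hhpos s)]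
    _ ≤ Real.exp (s * p + s ^ 2 / 8) := Real.exp_le_exp.2 hlog

lemma hoeff_mgf {Ω : Type*} [MeasurableSpace Ω] (μ : Measure Ω) [IsProbabilityMeasure μ]
    (X : Ω → ℝ) (hmeas : Measurable X) (hbdd : ∀ᵐ ω ∂μ, X ω ∈ Set.Icc (0:ℝ) 1)
    (m : ℝ) (hm : ∫ ω, X ω ∂μ = m) (s : ℝ) :
    mgf X μ s ≤ Real.exp (s * m + s ^ 2 / 8) := by
  have hXint : Integrable X μ := by
    refine (integrable_const (1:ℝ)).mono' hmeas.aestronglyMeasurable ?_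
    filter_upwards [hbdd] with ω hω
    rw [Real.norm_eq_abs, abs_le]; exact ⟨by linarith [hω.1], hω.2⟩
  have hint : Integrable (fun ω => Real.exp (s * X ω)) μ := by
    refine (integrable_const (Real.exp |s|)).mono'
      ((hmeas.const_mul s).exp).aestronglyMeasurable ?_
    filter_upwards [hbdd] with ω hω
    rw [Real.norm_eq_abs, abs_of_pos (Real.exp_pos _), Real.exp_le_exp]
    calc s * X ω ≤ |s * X ω| := le_abs_self _
      _ = |s| * |X ω| := abs_mul _ _
      _ ≤ |s| * 1 := by
          refine mul_le_mul_of_nonneg_left ?_ (abs_nonneg s)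
          rw [abs_le]; exact ⟨by linarith [hω.1], hω.2⟩
      _ = |s| := mul_one _
  have hptwise : ∀ᵐ ω ∂μ, Real.exp (s * X ω) ≤ 1 - X ω + X ω * Real.exp s := by
    filter_upwards [hbdd] with ω hω
    have := convexOn_exp.2 (Set.mem_univ (0:ℝ)) (Set.mem_univ s)
      (by linarith [hω.2] : (0:ℝ) ≤ 1 - X ω) hω.1 (by ring)
    simp only [smul_eq_mul, mul_zero, zero_add, Real.exp_zero, mul_one] at this
    rw [mul_comm] at this
    linarith
  have h0m : 0 ≤ m := by
    rw [← hm]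
    refine integral_nonneg_of_ae ?_
    filter_upwards [hbdd] with ω hω using hω.1
  have hm1 : m ≤ 1 := by
    rw [← hm]
    calc ∫ ω, X ω ∂μ ≤ ∫ _, (1:ℝ) ∂μ := by
          refine integral_mono_ae hXint (integrable_const 1) ?_
          filter_upwards [hbdd] with ω hω using hω.2
      _ = 1 := by simp
  calc mgf X μ s = ∫ ω, Real.exp (s * X ω) ∂μ := rfl
    _ ≤ ∫ ω, (1 - X ω + X ω * Real.exp s) ∂μ := by
        refine integral_mono_ae hint ?_ hptwise
        exact ((integrable_const 1).sub hXint).add (hXint.mul_const _)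
    _ = 1 - m + m * Real.exp s := by
        have hint1 : Integrable (fun ω => 1 - X ω) μ := (integrable_const 1).sub hXint
        have hint2 : Integrable (fun ω => X ω * Real.exp s) μ := hXint.mul_const _
        rw [integral_add hint1 hint2]
        have h2 : ∫ ω, (1 - X ω) ∂μ = 1 - m := by
          rw [integral_sub (integrable_const 1) hXint, hm]; simp
        rw [h2, integral_mul_const, hm]
    _ ≤ Real.exp (s * m + s ^ 2 / 8) := hoeff_core h0m hm1 s

lemma hoeff_iid {Ω : Type*} [MeasurableSpace Ω] (μ : Measure Ω) [IsProbabilityMeasure μ]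
    {B : ℕ} (hB : 0 < B) (X : Fin B → Ω → ℝ)
    (hmeas : ∀ b, Measurable (X b))
    (hindep : iIndepFun X μ)
    (hbdd : ∀ b, ∀ᵐ ω ∂μ, X b ω ∈ Set.Icc (0:ℝ) 1)
    (m : ℝ) (hmean : ∀ b, ∫ ω, X b ω ∂μ = m)
    (a : ℝ) (ha : 0 ≤ a) :
    (μ {ω | a < |(∑ b, X b ω) / B - m|}).toReal ≤ 2 * Real.exp (-2 * B * a ^ 2) := by
  set S : Ω → ℝ := fun ω => ∑ b, X b ω with hS
  have hBpos : (0:ℝ) < B := Nat.cast_pos.2 hB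
  -- integrability of exp(t * S) for any t
  have hSint : ∀ t : ℝ, Integrable (fun ω => Real.exp (t * S ω)) μ := by
    intro t
    have hSmeas : Measurable S := Finset.measurable_sum _ fun b _ => hmeas b
    refine (integrable_const (Real.exp (|t| * B))).mono'
      ((hSmeas.const_mul t).exp).aestronglyMeasurable ?_
    have hb : ∀ᵐ ω ∂μ, ∀ b, X b ω ∈ Set.Icc (0:ℝ) 1 := ae_all_iff.2 hbdd
    filter_upwards [hb] with ω hω
    rw [Real.norm_eq_abs, abs_of_pos (Real.exp_pos _), Real.exp_le_exp]
    have h1 : |S ω| ≤ B := by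
      calc |S ω| ≤ ∑ b, |X b ω| := Finset.abs_sum_le_sum_abs _ _
        _ ≤ ∑ _b : Fin B, (1:ℝ) := by
            refine Finset.sum_le_sum fun b _ => ?_
            rw [abs_le]; exact ⟨by linarith [(hω b).1], (hω b).2⟩
        _ = B := by simp
    calc t * S ω ≤ |t * S ω| := le_abs_self _
      _ = |t| * |S ω| := abs_mul _ _
      _ ≤ |t| * B := mul_le_mul_of_nonneg_left h1 (abs_nonneg t)
  -- mgf bound for sum
  have hmgfS : ∀ t : ℝ, mgf S μ t ≤ Real.exp (B * (t * m + t ^ 2 / 8)) := by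
    intro t
    rw [hS, show (fun ω => ∑ b, X b ω) = ∑ b, X b from by ext ω; simp,
      hindep.mgf_sum hmeas]
    calc ∏ b, mgf (X b) μ t ≤ ∏ _b : Fin B, Real.exp (t * m + t ^ 2 / 8) := by
          refine Finset.prod_le_prod (fun b _ => mgf_nonneg) fun b _ =>
            hoeff_mgf μ (X b) (hmeas b) (hbdd b) m (hmean b) t
      _ = Real.exp (B * (t * m + t ^ 2 / 8)) := by
          rw [Finset.prod_const, ← Real.exp_nat_mul]; simp [mul_comm]
  -- upper tail
  have hup : (μ {ω | (B:ℝ) * (m + a) ≤ S ω}).toReal ≤ Real.exp (-2 * B * a ^ 2) := by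
    have := measure_ge_le_exp_mul_mgf (μ := μ) (X := S) ((B:ℝ) * (m + a))
      (by positivity : (0:ℝ) ≤ 4 * a) (hSint (4 * a))
    refine this.trans ?_
    calc Real.exp (-(4 * a) * ((B:ℝ) * (m + a))) * mgf S μ (4 * a)
        ≤ Real.exp (-(4 * a) * ((B:ℝ) * (m + a))) * Real.exp (B * (4 * a * m + (4 * a) ^ 2 / 8)) :=
          mul_le_mul_of_nonneg_left (hmgfS (4 * a)) (Real.exp_pos _).le
      _ = Real.exp (-2 * B * a ^ 2) := by rw [← Real.exp_add]; ring_nf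
  -- lower tail
  have hlow : (μ {ω | S ω ≤ (B:ℝ) * (m - a)}).toReal ≤ Real.exp (-2 * B * a ^ 2) := by
    have := measure_le_le_exp_mul_mgf (μ := μ) (X := S) ((B:ℝ) * (m - a))
      (by linarith : -(4 * a) ≤ 0) (hSint (-(4 * a)))
    refine this.trans ?_
    calc Real.exp (-(-(4 * a)) * ((B:ℝ) * (m - a))) * mgf S μ (-(4 * a))
        ≤ Real.exp (-(-(4 * a)) * ((B:ℝ) * (m - a))) *
            Real.exp (B * (-(4 * a) * m + (-(4 * a)) ^ 2 / 8)) :=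
          mul_le_mul_of_nonneg_left (hmgfS (-(4 * a))) (Real.exp_pos _).le
      _ = Real.exp (-2 * B * a ^ 2) := by rw [← Real.exp_add]; ring_nf
  -- union bound
  have hsub : {ω | a < |S ω / B - m|} ⊆
      {ω | (B:ℝ) * (m + a) ≤ S ω} ∪ {ω | S ω ≤ (B:ℝ) * (m - a)} := by
    intro ω hω
    simp only [Set.mem_setOf_eq] at hω
    rcases lt_abs.1 hω with h | h
    · left
      simp only [Set.mem_setOf_eq]
      have h2 : (m + a) * B < S ω := (lt_div_iff₀ hBpos).1 (by linarith)
      calc (B:ℝ) * (m + a) = (m + a) * B := mul_comm _ _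
        _ ≤ S ω := h2.le
    · right
      simp only [Set.mem_setOf_eq]
      have h2 : S ω < (m - a) * B := (div_lt_iff₀ hBpos).1 (by linarith)
      calc S ω ≤ (m - a) * B := h2.le
        _ = (B:ℝ) * (m - a) := mul_comm _ _
  have hmeas_le : μ {ω | a < |S ω / B - m|} ≤
      μ {ω | (B:ℝ) * (m + a) ≤ S ω} + μ {ω | S ω ≤ (B:ℝ) * (m - a)} :=
    (measure_mono hsub).trans (measure_union_le _ _)
  have := ENNReal.toReal_mono (by finiteness) hmeas_le
  rw [ENNReal.toReal_add (by finiteness) (by finiteness)] at this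
  linarith

/-- finite-`B` stability: suppose the derandomized bagged algorithm is
`(ε,δ)`-stable (leave-one-out perturbations exceed `ε` for at most a `δ`-fraction of
indices), and the finite-`B` bagged predictions `f̂_B(x) = (Σ_b X_b)/B` and
`f̂_B^{∖i}(x) = (Σ_b X^i_b)/B` are averages of `B` iid `[0,1]`-valued draws with means
`f̂_∞(x)` and `f̂_∞^{∖i}(x)` respectively. Then for any `δ' > 0`,
`(1/n)·Σ_i P{|f̂_B(x) - f̂_B^{∖i}(x)| > ε + √((2/B)·log(4/δ'))} ≤ δ + δ'`. -/
theorem finite_B_bagging_stability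
    {Ω : Type*} [MeasurableSpace Ω] (μ : Measure Ω) [IsProbabilityMeasure μ]
    (n B : ℕ) (hn : 0 < n) (hB : 0 < B)
    (ε δ δ' : ℝ) (hε : 0 ≤ ε) (hδ : 0 ≤ δ) (hδ' : 0 < δ')
    (yinf : ℝ) (looinf : Fin n → ℝ)
    (hstab : ((Finset.univ.filter (fun i : Fin n => ε < |yinf - looinf i|)).card : ℝ)
      ≤ δ * n)
    (X : Fin B → Ω → ℝ) (Xi : Fin n → Fin B → Ω → ℝ)
    (hXmeas : ∀ b, Measurable (X b)) (hXimeas : ∀ i b, Measurable (Xi i b))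
    (hXindep : iIndepFun X μ)
    (hXiindep : ∀ i, iIndepFun (Xi i) μ)
    (hXident : ∀ b b', IdentDistrib (X b) (X b') μ μ)
    (hXiident : ∀ i b b', IdentDistrib (Xi i b) (Xi i b') μ μ)
    (hXbdd : ∀ b, ∀ᵐ ω ∂μ, X b ω ∈ Set.Icc (0 : ℝ) 1)
    (hXibdd : ∀ i b, ∀ᵐ ω ∂μ, Xi i b ω ∈ Set.Icc (0 : ℝ) 1)
    (hXmean : ∀ b, ∫ ω, X b ω ∂μ = yinf)
    (hXimean : ∀ i b, ∫ ω, Xi i b ω ∂μ = looinf i) :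
    (1 / n) * ∑ i : Fin n,
        (μ {ω | ε + Real.sqrt ((2 / B) * Real.log (4 / δ'))
            < |(∑ b, X b ω) / B - (∑ b, Xi i b ω) / B|}).toReal
      ≤ δ + δ' := by
  classical
  have hnpos : (0:ℝ) < n := Nat.cast_pos.2 hn
  have hBpos : (0:ℝ) < B := Nat.cast_pos.2 hB
  have hone : ∀ (s : Set Ω), (μ s).toReal ≤ 1 := fun s => by
    rw [← ENNReal.toReal_one]
    exact ENNReal.toReal_mono (by finiteness) prob_le_one
  rcases le_or_gt 1 δ' with h1 | h1
  · -- trivial case: δ' ≥ 1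
    calc (1 / (n:ℝ)) * ∑ i : Fin n, (μ _).toReal
        ≤ (1 / (n:ℝ)) * ∑ _i : Fin n, (1:ℝ) := by
          refine mul_le_mul_of_nonneg_left (Finset.sum_le_sum fun i _ => hone _) (by positivity)
      _ = 1 := by field_simp; simp
      _ ≤ δ + δ' := by linarith
  · set t := Real.sqrt ((2 / B) * Real.log (4 / δ')) with ht
    set a := t / 2 with ha
    have hlogpos : 0 < Real.log (4 / δ') := by
      refine Real.log_pos ?_
      rw [lt_div_iff₀ hδ']; linarith
    have htnonneg : 0 ≤ t := Real.sqrt_nonneg _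
    have hanonneg : 0 ≤ a := by positivity
    have ht2 : t ^ 2 = (2 / B) * Real.log (4 / δ') := by
      rw [ht, Real.sq_sqrt (by positivity)]
    have hexp : 2 * Real.exp (-2 * B * a ^ 2) = δ' / 2 := by
      have : -2 * (B:ℝ) * a ^ 2 = -Real.log (4 / δ') := by
        rw [ha]
        have : (t / 2) ^ 2 = t ^ 2 / 4 := by ring
        rw [this, ht2]
        field_simp
        ring
      rw [this, Real.exp_neg, Real.exp_log (by positivity)]
      field_simp
      ring
    -- per-index bound for good indices
    have hgood : ∀ i : Fin n, ¬ (ε < |yinf - looinf i|) →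
        (μ {ω | ε + t < |(∑ b, X b ω) / B - (∑ b, Xi i b ω) / B|}).toReal ≤ δ' := by
      intro i hi
      push_neg at hi
      have hsub : {ω | ε + t < |(∑ b, X b ω) / B - (∑ b, Xi i b ω) / B|} ⊆
          {ω | a < |(∑ b, X b ω) / B - yinf|} ∪
          {ω | a < |(∑ b, Xi i b ω) / B - looinf i|} := by
        intro ω hω
        simp only [Set.mem_setOf_eq, Set.mem_union] at hω ⊢
        by_contra hc
        push_neg at hc
        obtain ⟨hc1, hc2⟩ := hc
        have e1 : |(∑ b, X b ω) / B - (∑ b, Xi i b ω) / B| ≤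
            |(∑ b, X b ω) / B - yinf| + |yinf - looinf i| +
            |(∑ b, Xi i b ω) / B - looinf i| := by
          have t1 := abs_sub_le ((∑ b, X b ω) / B) yinf ((∑ b, Xi i b ω) / B)
          have t2 := abs_sub_le yinf (looinf i) ((∑ b, Xi i b ω) / B)
          have t3 : |looinf i - (∑ b, Xi i b ω) / B| = |(∑ b, Xi i b ω) / B - looinf i| :=
            abs_sub_comm _ _
          linarith
        have : t = a + a := by rw [ha]; ring
        linarith
      have h1 := hoeff_iid μ hB X hXmeas hXindep hXbdd yinf hXmean a hanonneg
      have h2 := hoeff_iid μ hB (Xi i) (hXimeas i) (hXiindep i) (hXibdd i)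
        (looinf i) (hXimean i) a hanonneg
      have hle : μ {ω | ε + t < |(∑ b, X b ω) / B - (∑ b, Xi i b ω) / B|} ≤
          μ {ω | a < |(∑ b, X b ω) / B - yinf|} +
          μ {ω | a < |(∑ b, Xi i b ω) / B - looinf i|} :=
        (measure_mono hsub).trans (measure_union_le _ _)
      have := ENNReal.toReal_mono (by finiteness) hle
      rw [ENNReal.toReal_add (by finiteness) (by finiteness)] at this
      rw [hexp] at h1 h2
      linarith
    -- sum bound
    have hsum : ∑ i : Fin n,
        (μ {ω | ε + t < |(∑ b, X b ω) / B - (∑ b, Xi i b ω) / B|}).toReal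
        ≤ δ * n + n * δ' := by
      calc ∑ i : Fin n, (μ {ω | ε + t < |(∑ b, X b ω) / B - (∑ b, Xi i b ω) / B|}).toReal
          ≤ ∑ i : Fin n, ((if ε < |yinf - looinf i| then (1:ℝ) else 0) + δ') := by
            refine Finset.sum_le_sum fun i _ => ?_
            by_cases hi : ε < |yinf - looinf i|
            · simp only [hi, if_true]
              linarith [hone {ω | ε + t < |(∑ b, X b ω) / B - (∑ b, Xi i b ω) / B|}]
            · simp only [hi, if_false]
              linarith [hgood i hi]
        _ = ((Finset.univ.filter (fun i : Fin n => ε < |yinf - looinf i|)).card : ℝ)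
            + n * δ' := by
            rw [Finset.sum_add_distrib, Finset.sum_boole, Finset.sum_const]
            simp [mul_comm]
        _ ≤ δ * n + n * δ' := by linarith [hstab]
    calc (1 / (n:ℝ)) * ∑ i : Fin n,
          (μ {ω | ε + t < |(∑ b, X b ω) / B - (∑ b, Xi i b ω) / B|}).toReal
        ≤ (1 / (n:ℝ)) * (δ * n + n * δ') := by
          refine mul_le_mul_of_nonneg_left hsum (by positivity)
      _ = δ + δ' := by field_simp
end
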